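/- arXiv:1808.09641 — 5 statements merged into one kernel-verified Lean document; each statement's English description precedes it below -/
import Mathlib

section
/- Let Ω ⊆ ℝ² be open and connected and let (F, N, ρ) be a Gauss–Weingarten triple on Ω. Then the following are equivalent on Ω: (i) det(F_x, F_xx, F_xxx) vanishes identically on Ω (i.e. the x-curvature lines are planar); (ii) det(F_y, F_yy, F_yyy) vanishes identically on Ω (i.e. the y-curvature lines are planar); (iii) ρ_xy vanishes identically on Ω. Here det denotes the 3×3 determinant of the three column vectors and subscripts denote partial derivatives. -/
noncomputable section

/-- Minkowski inner product on ℝ^{2,1} = ℝ³, coordinates (ξ₁, ξ₂, ξ₀). -/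
def mink (a b : ℝ × ℝ × ℝ) : ℝ := a.1 * b.1 + a.2.1 * b.2.1 - a.2.2 * b.2.2

/-- Partial derivative in the first (x) variable. -/
def pdx {E : Type*} [NormedAddCommGroup E] [NormedSpace ℝ E]
    (f : ℝ × ℝ → E) (p : ℝ × ℝ) : E :=
  deriv (fun t => f (t, p.2)) p.1

/-- Partial derivative in the second (y) variable. -/
def pdy {E : Type*} [NormedAddCommGroup E] [NormedSpace ℝ E]
    (f : ℝ × ℝ → E) (p : ℝ × ℝ) : E :=
  deriv (fun t => f (p.1, t)) p.2

/-- Determinant of the 3×3 matrix with columns a, b, c. -/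
def det3 (a b c : ℝ × ℝ × ℝ) : ℝ :=
  a.1 * (b.2.1 * c.2.2 - b.2.2 * c.2.1)
  - b.1 * (a.2.1 * c.2.2 - a.2.2 * c.2.1)
  + c.1 * (a.2.1 * b.2.2 - a.2.2 * b.2.1)

open Filter Topology

section Aux

variable {E : Type*} [NormedAddCommGroup E] [NormedSpace ℝ E]

lemma hasDerivAt_slice_x (p : ℝ × ℝ) :
    HasDerivAt (fun t => ((t, p.2) : ℝ × ℝ)) (1, 0) p.1 :=
  (hasDerivAt_id p.1).prodMk (hasDerivAt_const p.1 p.2)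

lemma hasDerivAt_slice_y (p : ℝ × ℝ) :
    HasDerivAt (fun t => ((p.1, t) : ℝ × ℝ)) (0, 1) p.2 :=
  (hasDerivAt_const p.2 p.1).prodMk (hasDerivAt_id p.2)

lemma pdx_fderiv {f : ℝ × ℝ → E} {p : ℝ × ℝ} (hf : DifferentiableAt ℝ f p) :
    HasDerivAt (fun t => f (t, p.2)) (fderiv ℝ f p (1, 0)) p.1 :=
  hf.hasFDerivAt.comp_hasDerivAt p.1 (hasDerivAt_slice_x p)

lemma pdy_fderiv {f : ℝ × ℝ → E} {p : ℝ × ℝ} (hf : DifferentiableAt ℝ f p) :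
    HasDerivAt (fun t => f (p.1, t)) (fderiv ℝ f p (0, 1)) p.2 :=
  hf.hasFDerivAt.comp_hasDerivAt p.2 (hasDerivAt_slice_y p)

lemma pdx_eq {f : ℝ × ℝ → E} {p : ℝ × ℝ} (hf : DifferentiableAt ℝ f p) :
    pdx f p = fderiv ℝ f p (1, 0) :=
  (pdx_fderiv hf).deriv

lemma pdy_eq {f : ℝ × ℝ → E} {p : ℝ × ℝ} (hf : DifferentiableAt ℝ f p) :
    pdy f p = fderiv ℝ f p (0, 1) :=
  (pdy_fderiv hf).deriv

lemma hasDerivAt_pdx {f : ℝ × ℝ → E} {p : ℝ × ℝ} (hf : DifferentiableAt ℝ f p) :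
    HasDerivAt (fun t => f (t, p.2)) (pdx f p) p.1 := by
  rw [pdx_eq hf]; exact pdx_fderiv hf

lemma hasDerivAt_pdy {f : ℝ × ℝ → E} {p : ℝ × ℝ} (hf : DifferentiableAt ℝ f p) :
    HasDerivAt (fun t => f (p.1, t)) (pdy f p) p.2 := by
  rw [pdy_eq hf]; exact pdy_fderiv hf

lemma pdx_congr {f g : ℝ × ℝ → E} {Ω : Set (ℝ × ℝ)} (hΩ : IsOpen Ω) {p : ℝ × ℝ}
    (hp : p ∈ Ω) (h : ∀ q ∈ Ω, f q = g q) : pdx f p = pdx g p := by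
  unfold pdx
  apply Filter.EventuallyEq.deriv_eq
  have hc : ContinuousAt (fun t : ℝ => ((t, p.2) : ℝ × ℝ)) p.1 :=
    (continuous_id.prodMk continuous_const).continuousAt
  filter_upwards [hc.preimage_mem_nhds (hΩ.mem_nhds hp)] with t ht using h _ ht

lemma pdy_congr {f g : ℝ × ℝ → E} {Ω : Set (ℝ × ℝ)} (hΩ : IsOpen Ω) {p : ℝ × ℝ}
    (hp : p ∈ Ω) (h : ∀ q ∈ Ω, f q = g q) : pdy f p = pdy g p := by
  unfold pdy
  apply Filter.EventuallyEq.deriv_eq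
  have hc : ContinuousAt (fun t : ℝ => ((p.1, t) : ℝ × ℝ)) p.2 :=
    (continuous_const.prodMk continuous_id).continuousAt
  filter_upwards [hc.preimage_mem_nhds (hΩ.mem_nhds hp)] with t ht using h _ ht

lemma contDiffOn_pdx {f : ℝ × ℝ → E} {Ω : Set (ℝ × ℝ)} (hΩ : IsOpen Ω)
    (hf : ContDiffOn ℝ (⊤ : ℕ∞) f Ω) : ContDiffOn ℝ (⊤ : ℕ∞) (pdx f) Ω := by
  have h1 : ContDiffOn ℝ (⊤ : ℕ∞) (fun q => fderiv ℝ f q ((1 : ℝ), (0 : ℝ))) Ω :=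
    (hf.fderiv_of_isOpen hΩ (by simp)).clm_apply contDiffOn_const
  exact h1.congr fun q hq =>
    pdx_eq ((hf.contDiffAt (hΩ.mem_nhds hq)).differentiableAt (by simp))

lemma contDiffOn_pdy {f : ℝ × ℝ → E} {Ω : Set (ℝ × ℝ)} (hΩ : IsOpen Ω)
    (hf : ContDiffOn ℝ (⊤ : ℕ∞) f Ω) : ContDiffOn ℝ (⊤ : ℕ∞) (pdy f) Ω := by
  have h1 : ContDiffOn ℝ (⊤ : ℕ∞) (fun q => fderiv ℝ f q ((0 : ℝ), (1 : ℝ))) Ω :=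
    (hf.fderiv_of_isOpen hΩ (by simp)).clm_apply contDiffOn_const
  exact h1.congr fun q hq =>
    pdy_eq ((hf.contDiffAt (hΩ.mem_nhds hq)).differentiableAt (by simp))

lemma pd_clm_x {c : ℝ × ℝ → (ℝ × ℝ) →L[ℝ] E} {c' : (ℝ × ℝ) →L[ℝ] (ℝ × ℝ) →L[ℝ] E}
    {p : ℝ × ℝ} (hc : HasFDerivAt c c' p) (v : ℝ × ℝ) :
    pdx (fun q => c q v) p = c' (1, 0) v := by
  have h := hc.clm_apply (hasFDerivAt_const v p)
  rw [pdx_eq h.differentiableAt, h.fderiv]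
  simp

lemma pd_clm_y {c : ℝ × ℝ → (ℝ × ℝ) →L[ℝ] E} {c' : (ℝ × ℝ) →L[ℝ] (ℝ × ℝ) →L[ℝ] E}
    {p : ℝ × ℝ} (hc : HasFDerivAt c c' p) (v : ℝ × ℝ) :
    pdy (fun q => c q v) p = c' (0, 1) v := by
  have h := hc.clm_apply (hasFDerivAt_const v p)
  rw [pdy_eq h.differentiableAt, h.fderiv]
  simp

/-- Schwarz symmetry of mixed partials for smooth functions on an open set. -/
lemma pdx_pdy_symm {f : ℝ × ℝ → E} {Ω : Set (ℝ × ℝ)} (hΩ : IsOpen Ω)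
    (hf : ContDiffOn ℝ (⊤ : ℕ∞) f Ω) {p : ℝ × ℝ} (hp : p ∈ Ω) :
    pdx (pdy f) p = pdy (pdx f) p := by
  have hca : ContDiffAt ℝ (⊤ : ℕ∞) f p := hf.contDiffAt (hΩ.mem_nhds hp)
  have hsymm := hca.isSymmSndFDerivAt (by rw [minSmoothness_of_isRCLikeNormedField]; exact WithTop.coe_le_coe.mpr le_top)
  have hc' : HasFDerivAt (fderiv ℝ f) (fderiv ℝ (fderiv ℝ f) p) p :=
    ((hca.fderiv_right (m := (⊤ : ℕ∞)) (by simp)).differentiableAt (by simp)).hasFDerivAt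
  have h1 : pdy (pdx f) p = fderiv ℝ (fderiv ℝ f) p (0, 1) (1, 0) := by
    rw [pdy_congr hΩ hp (fun q hq =>
      pdx_eq ((hf.contDiffAt (hΩ.mem_nhds hq)).differentiableAt (by simp)))]
    exact pd_clm_y hc' (1, 0)
  have h2 : pdx (pdy f) p = fderiv ℝ (fderiv ℝ f) p (1, 0) (0, 1) := by
    rw [pdx_congr hΩ hp (fun q hq =>
      pdy_eq ((hf.contDiffAt (hΩ.mem_nhds hq)).differentiableAt (by simp)))]
    exact pd_clm_x hc' (0, 1)
  rw [h1, h2, hsymm]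

end Aux

lemma mink_comm (a b : ℝ × ℝ × ℝ) : mink a b = mink b a := by
  simp only [mink]; ring

lemma det3_sq (X Y n : ℝ × ℝ × ℝ) :
    det3 X Y n ^ 2 = -(mink X X * (mink Y Y * mink n n - mink Y n ^ 2)
      - mink X Y * (mink X Y * mink n n - mink X n * mink Y n)
      + mink X n * (mink X Y * mink Y n - mink Y Y * mink X n)) := by
  obtain ⟨x1, x2, x3⟩ := X; obtain ⟨y1, y2, y3⟩ := Y; obtain ⟨n1, n2, n3⟩ := n
  simp only [det3, mink]; ring

lemma det3_x_alg (X Y n : ℝ × ℝ × ℝ) (r rx ry rxx rxy : ℝ) (hr : r ≠ 0) :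
    det3 X (-n + (rx / r) • X + (ry / r) • Y)
      (-((r ^ 2)⁻¹ • X)
        + ((rx / r) • (-n + (rx / r) • X + (ry / r) • Y)
            + ((rxx * r - rx * rx) / r ^ 2) • X)
        + ((ry / r) • ((ry / r) • X + (rx / r) • Y)
            + ((rxy * r - ry * rx) / r ^ 2) • Y))
    = rxy / r * det3 X Y n := by
  obtain ⟨x1, x2, x3⟩ := X; obtain ⟨y1, y2, y3⟩ := Y; obtain ⟨n1, n2, n3⟩ := n
  simp only [det3, Prod.smul_mk, smul_eq_mul, Prod.mk_add_mk, Prod.neg_mk]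
  field_simp
  ring

lemma det3_y_alg (X Y n : ℝ × ℝ × ℝ) (r rx ry rxy ryy : ℝ) (hr : r ≠ 0) :
    det3 Y (-n + (rx / r) • X + (ry / r) • Y)
      (-((-(r ^ 2)⁻¹) • Y)
        + ((rx / r) • ((ry / r) • X + (rx / r) • Y)
            + ((rxy * r - rx * ry) / r ^ 2) • X)
        + ((ry / r) • (-n + (rx / r) • X + (ry / r) • Y)
            + ((ryy * r - ry * ry) / r ^ 2) • Y))
    = -(rxy / r) * det3 X Y n := by
  obtain ⟨x1, x2, x3⟩ := X; obtain ⟨y1, y2, y3⟩ := Y; obtain ⟨n1, n2, n3⟩ := n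
  simp only [det3, Prod.smul_mk, smul_eq_mul, Prod.mk_add_mk, Prod.neg_mk]
  field_simp
  ring

/-- For a Gauss–Weingarten triple (F, N, ρ) on an open connected Ω ⊆ ℝ², the following are
equivalent: (i) the x-curvature lines are planar (det(F_x, F_xx, F_xxx) ≡ 0), (ii) the
y-curvature lines are planar (det(F_y, F_yy, F_yyy) ≡ 0), (iii) ρ_xy ≡ 0 on Ω. -/
theorem planar_curvature_lines_tfae
    (Ω : Set (ℝ × ℝ)) (hΩ : IsOpen Ω) (hΩconn : IsConnected Ω)
    (F N : ℝ × ℝ → ℝ × ℝ × ℝ) (ρ : ℝ × ℝ → ℝ)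
    (hF : ContDiffOn ℝ (⊤ : ℕ∞) F Ω) (hN : ContDiffOn ℝ (⊤ : ℕ∞) N Ω) (hρ : ContDiffOn ℝ (⊤ : ℕ∞) ρ Ω)
    (hρpos : ∀ p ∈ Ω, 0 < ρ p)
    (hFx : ∀ p ∈ Ω, mink (pdx F p) (pdx F p) = (ρ p) ^ 2)
    (hFy : ∀ p ∈ Ω, mink (pdy F p) (pdy F p) = -(ρ p) ^ 2)
    (hFxFy : ∀ p ∈ Ω, mink (pdx F p) (pdy F p) = 0)
    (hNN : ∀ p ∈ Ω, mink (N p) (N p) = 1)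
    (hNFx : ∀ p ∈ Ω, mink (N p) (pdx F p) = 0)
    (hNFy : ∀ p ∈ Ω, mink (N p) (pdy F p) = 0)
    (hFxx : ∀ p ∈ Ω, pdx (pdx F) p
      = -N p + (pdx ρ p / ρ p) • pdx F p + (pdy ρ p / ρ p) • pdy F p)
    (hFyy : ∀ p ∈ Ω, pdy (pdy F) p
      = -N p + (pdx ρ p / ρ p) • pdx F p + (pdy ρ p / ρ p) • pdy F p)
    (hFxy : ∀ p ∈ Ω, pdy (pdx F) p
      = (pdy ρ p / ρ p) • pdx F p + (pdx ρ p / ρ p) • pdy F p)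
    (hNx : ∀ p ∈ Ω, pdx N p = ((ρ p) ^ 2)⁻¹ • pdx F p)
    (hNy : ∀ p ∈ Ω, pdy N p = -(((ρ p) ^ 2)⁻¹) • pdy F p) :
    [(∀ p ∈ Ω, det3 (pdx F p) (pdx (pdx F) p) (pdx (pdx (pdx F)) p) = 0),
     (∀ p ∈ Ω, det3 (pdy F p) (pdy (pdy F) p) (pdy (pdy (pdy F)) p) = 0),
     (∀ p ∈ Ω, pdy (pdx ρ) p = 0)].TFAE := by
  -- smoothness of first partials
  have hρxΩ : ContDiffOn ℝ (⊤ : ℕ∞) (pdx ρ) Ω := contDiffOn_pdx hΩ hρ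
  have hρyΩ : ContDiffOn ℝ (⊤ : ℕ∞) (pdy ρ) Ω := contDiffOn_pdy hΩ hρ
  have hFxΩ : ContDiffOn ℝ (⊤ : ℕ∞) (pdx F) Ω := contDiffOn_pdx hΩ hF
  have hFyΩ : ContDiffOn ℝ (⊤ : ℕ∞) (pdy F) Ω := contDiffOn_pdy hΩ hF
  -- nondegeneracy of the frame determinant
  have hD : ∀ p ∈ Ω, det3 (pdx F p) (pdy F p) (N p) ≠ 0 := by
    intro p hp
    have hsq : det3 (pdx F p) (pdy F p) (N p) ^ 2 = (ρ p) ^ 4 := by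
      rw [det3_sq, hFx p hp, hFy p hp, hFxFy p hp, hNN p hp,
        mink_comm (pdy F p) (N p), hNFy p hp, mink_comm (pdx F p) (N p), hNFx p hp]
      ring
    intro h
    rw [h] at hsq
    have : (ρ p) ^ 4 ≠ 0 := pow_ne_zero _ (hρpos p hp).ne'
    simp at hsq
    exact this hsq.symm
  -- key pointwise identity in the x-direction
  have key1 : ∀ p ∈ Ω,
      det3 (pdx F p) (pdx (pdx F) p) (pdx (pdx (pdx F)) p)
        = pdy (pdx ρ) p / ρ p * det3 (pdx F p) (pdy F p) (N p) := by
    intro p hp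
    have mem := hΩ.mem_nhds hp
    have hr : ρ p ≠ 0 := (hρpos p hp).ne'
    have dN : DifferentiableAt ℝ N p := (hN.contDiffAt mem).differentiableAt (by simp)
    have dρ : DifferentiableAt ℝ ρ p := (hρ.contDiffAt mem).differentiableAt (by simp)
    have dρx : DifferentiableAt ℝ (pdx ρ) p := (hρxΩ.contDiffAt mem).differentiableAt (by simp)
    have dρy : DifferentiableAt ℝ (pdy ρ) p := (hρyΩ.contDiffAt mem).differentiableAt (by simp)
    have dFx : DifferentiableAt ℝ (pdx F) p := (hFxΩ.contDiffAt mem).differentiableAt (by simp)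
    have dFy : DifferentiableAt ℝ (pdy F) p := (hFyΩ.contDiffAt mem).differentiableAt (by simp)
    have hN1 := hasDerivAt_pdx dN
    have hρ1 := hasDerivAt_pdx dρ
    have hρx1 := hasDerivAt_pdx dρx
    have hρy1 := hasDerivAt_pdx dρy
    have hFx1 := hasDerivAt_pdx dFx
    have hFy1 := hasDerivAt_pdx dFy
    have hG := (hN1.neg.add ((hρx1.div hρ1 hr).smul hFx1)).add ((hρy1.div hρ1 hr).smul hFy1)
    have e3 : pdx (pdx (pdx F)) p
        = -(pdx N p)
          + ((pdx ρ p / ρ p) • pdx (pdx F) p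
              + ((pdx (pdx ρ) p * ρ p - pdx ρ p * pdx ρ p) / ρ p ^ 2) • pdx F p)
          + ((pdy ρ p / ρ p) • pdx (pdy F) p
              + ((pdx (pdy ρ) p * ρ p - pdy ρ p * pdx ρ p) / ρ p ^ 2) • pdy F p) := by
      rw [pdx_congr hΩ hp hFxx]
      exact hG.deriv
    have sρ : pdx (pdy ρ) p = pdy (pdx ρ) p := pdx_pdy_symm hΩ hρ hp
    have sF : pdx (pdy F) p = pdy (pdx F) p := pdx_pdy_symm hΩ hF hp
    rw [e3, sρ, sF, hFxy p hp, hFxx p hp, hNx p hp]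
    exact det3_x_alg (pdx F p) (pdy F p) (N p) (ρ p) (pdx ρ p) (pdy ρ p)
      (pdx (pdx ρ) p) (pdy (pdx ρ) p) hr
  -- key pointwise identity in the y-direction
  have key2 : ∀ p ∈ Ω,
      det3 (pdy F p) (pdy (pdy F) p) (pdy (pdy (pdy F)) p)
        = -(pdy (pdx ρ) p / ρ p) * det3 (pdx F p) (pdy F p) (N p) := by
    intro p hp
    have mem := hΩ.mem_nhds hp
    have hr : ρ p ≠ 0 := (hρpos p hp).ne'
    have dN : DifferentiableAt ℝ N p := (hN.contDiffAt mem).differentiableAt (by simp)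
    have dρ : DifferentiableAt ℝ ρ p := (hρ.contDiffAt mem).differentiableAt (by simp)
    have dρx : DifferentiableAt ℝ (pdx ρ) p := (hρxΩ.contDiffAt mem).differentiableAt (by simp)
    have dρy : DifferentiableAt ℝ (pdy ρ) p := (hρyΩ.contDiffAt mem).differentiableAt (by simp)
    have dFx : DifferentiableAt ℝ (pdx F) p := (hFxΩ.contDiffAt mem).differentiableAt (by simp)
    have dFy : DifferentiableAt ℝ (pdy F) p := (hFyΩ.contDiffAt mem).differentiableAt (by simp)
    have hN2 := hasDerivAt_pdy dN
    have hρ2 := hasDerivAt_pdy dρ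
    have hρx2 := hasDerivAt_pdy dρx
    have hρy2 := hasDerivAt_pdy dρy
    have hFx2 := hasDerivAt_pdy dFx
    have hFy2 := hasDerivAt_pdy dFy
    have hG := (hN2.neg.add ((hρx2.div hρ2 hr).smul hFx2)).add ((hρy2.div hρ2 hr).smul hFy2)
    have e3 : pdy (pdy (pdy F)) p
        = -(pdy N p)
          + ((pdx ρ p / ρ p) • pdy (pdx F) p
              + ((pdy (pdx ρ) p * ρ p - pdx ρ p * pdy ρ p) / ρ p ^ 2) • pdx F p)
          + ((pdy ρ p / ρ p) • pdy (pdy F) p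
              + ((pdy (pdy ρ) p * ρ p - pdy ρ p * pdy ρ p) / ρ p ^ 2) • pdy F p) := by
      rw [pdy_congr hΩ hp hFyy]
      exact hG.deriv
    rw [e3, hFxy p hp, hFyy p hp, hNy p hp]
    exact det3_y_alg (pdx F p) (pdy F p) (N p) (ρ p) (pdx ρ p) (pdy ρ p)
      (pdy (pdx ρ) p) (pdy (pdy ρ) p) hr
  tfae_have 1 ↔ 3 := by
    constructor
    · intro h p hp
      have k := key1 p hp
      rw [h p hp] at k
      rcases mul_eq_zero.1 k.symm with h1 | h1
      · rcases div_eq_zero_iff.1 h1 with h2 | h2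
        · exact h2
        · exact absurd h2 (hρpos p hp).ne'
      · exact absurd h1 (hD p hp)
    · intro h p hp
      rw [key1 p hp, h p hp]
      simp
  tfae_have 2 ↔ 3 := by
    constructor
    · intro h p hp
      have k := key2 p hp
      rw [h p hp] at k
      have k' : pdy (pdx ρ) p / ρ p * det3 (pdx F p) (pdy F p) (N p) = 0 := by
        have := k.symm
        linarith [this]
      rcases mul_eq_zero.1 k' with h1 | h1
      · rcases div_eq_zero_iff.1 h1 with h2 | h2
        · exact h2
        · exact absurd h2 (hρpos p hp).ne'
      · exact absurd h1 (hD p hp)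
    · intro h p hp
      rw [key2 p hp, h p hp]
      simp
  tfae_finish
end
end

section
/- Let I, J ⊆ ℝ be open intervals, Ω = I × J, and let ρ : Ω → (0,∞) be a smooth function satisfying the timelike-minimal planar-curvature-line system on Ω, and suppose additionally that ρ_xx − ρ_yy is nowhere zero on Ω. Then there exist smooth functions f : I → ℝ and g : J → ℝ and constants c, d ∈ ℝ with c² + d² ≠ 0 such that for all (x,y) ∈ Ω: ρ_x(x,y) = f(x), ρ_y(x,y) = g(y), f′(x) − g′(y) ≠ 0, ρ(x,y) = (f(x)² − g(y)² + 1)/(f′(x) − g′(y)), and f satisfies (f′)² = (c−d)f² + c and f″ = (c−d)f on I while g satisfies (g′)² = (c−d)g² + d and g″ = (c−d)g on J. -/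
noncomputable section

lemma aux_const_of_deriv_zero {s : Set ℝ} (hs : IsOpen s) (hc : s.OrdConnected)
    {h : ℝ → ℝ} (hd : ∀ x ∈ s, HasDerivAt h 0 x) {a b : ℝ} (ha : a ∈ s) (hb : b ∈ s) :
    h a = h b := by
  have hconv : Convex ℝ s := convex_iff_ordConnected.2 hc
  refine hconv.is_const_of_fderivWithin_eq_zero
    (fun x hx => ((hd x hx).differentiableAt).differentiableWithinAt) ?_ ha hb
  intro x hx
  rw [fderivWithin_of_isOpen hs hx, (hd x hx).hasFDerivAt.fderiv]
  ext
  simp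

lemma aux_slice_x {E : Type*} [NormedAddCommGroup E] [NormedSpace ℝ E]
    (h : ℝ × ℝ → E) (p : ℝ × ℝ) (hd : DifferentiableAt ℝ h p) :
    HasDerivAt (fun t => h (t, p.2)) (fderiv ℝ h p (1, 0)) p.1 := by
  have h2 : HasDerivAt (fun t : ℝ => (t, p.2)) ((1 : ℝ), (0 : ℝ)) p.1 :=
    (hasDerivAt_id p.1).prodMk (hasDerivAt_const p.1 p.2)
  simpa [Function.comp_def] using hd.hasFDerivAt.comp_hasDerivAt p.1 h2

lemma aux_slice_y {E : Type*} [NormedAddCommGroup E] [NormedSpace ℝ E]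
    (h : ℝ × ℝ → E) (p : ℝ × ℝ) (hd : DifferentiableAt ℝ h p) :
    HasDerivAt (fun t => h (p.1, t)) (fderiv ℝ h p (0, 1)) p.2 := by
  have h2 : HasDerivAt (fun t : ℝ => (p.1, t)) ((0 : ℝ), (1 : ℝ)) p.2 :=
    (hasDerivAt_const p.2 p.1).prodMk (hasDerivAt_id p.2)
  simpa [Function.comp_def] using hd.hasFDerivAt.comp_hasDerivAt p.2 h2

lemma aux_slice_x_apply (D : ℝ × ℝ → (ℝ × ℝ) →L[ℝ] ℝ) (p : ℝ × ℝ)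
    (hd : DifferentiableAt ℝ D p) (v : ℝ × ℝ) :
    HasDerivAt (fun t => D (t, p.2) v) (fderiv ℝ D p (1, 0) v) p.1 := by
  simpa using (aux_slice_x D p hd).clm_apply (hasDerivAt_const p.1 v)

lemma aux_slice_y_apply (D : ℝ × ℝ → (ℝ × ℝ) →L[ℝ] ℝ) (p : ℝ × ℝ)
    (hd : DifferentiableAt ℝ D p) (v : ℝ × ℝ) :
    HasDerivAt (fun t => D (p.1, t) v) (fderiv ℝ D p (0, 1) v) p.2 := by
  simpa using (aux_slice_y D p hd).clm_apply (hasDerivAt_const p.2 v)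

set_option maxHeartbeats 2000000 in
/-- If ρ satisfies the timelike-minimal planar-curvature-line system on Ω = I × J and
ρ_xx − ρ_yy is nowhere zero, then ρ_x = f(x), ρ_y = g(y) and
ρ = (f² − g² + 1)/(f′ − g′) with f, g solving the displayed ODE system for some constants
c, d with c² + d² ≠ 0. -/
theorem case1_reduction_to_ODEs
    (I J : Set ℝ) (hI : IsOpen I) (hIc : I.OrdConnected)
    (hJ : IsOpen J) (hJc : J.OrdConnected)
    (ρ : ℝ × ℝ → ℝ) (hρ : ContDiffOn ℝ (⊤ : ℕ∞) ρ (I ×ˢ J))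
    (hρpos : ∀ p ∈ I ×ˢ J, 0 < ρ p)
    (hpde1 : ∀ p ∈ I ×ˢ J,
      ρ p * (pdx (pdx ρ) p - pdy (pdy ρ) p) - ((pdx ρ p) ^ 2 - (pdy ρ p) ^ 2) - 1 = 0)
    (hpde2 : ∀ p ∈ I ×ˢ J, pdy (pdx ρ) p = 0)
    (hbox : ∀ p ∈ I ×ˢ J, pdx (pdx ρ) p - pdy (pdy ρ) p ≠ 0) :
    ∃ (f g : ℝ → ℝ) (c d : ℝ),
      ContDiffOn ℝ (⊤ : ℕ∞) f I ∧ ContDiffOn ℝ (⊤ : ℕ∞) g J ∧ c ^ 2 + d ^ 2 ≠ 0 ∧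
      (∀ x ∈ I, ∀ y ∈ J,
        pdx ρ (x, y) = f x ∧ pdy ρ (x, y) = g y ∧
        deriv f x - deriv g y ≠ 0 ∧
        ρ (x, y) = ((f x) ^ 2 - (g y) ^ 2 + 1) / (deriv f x - deriv g y)) ∧
      (∀ x ∈ I, (deriv f x) ^ 2 = (c - d) * (f x) ^ 2 + c ∧
        deriv (deriv f) x = (c - d) * f x) ∧
      (∀ y ∈ J, (deriv g y) ^ 2 = (c - d) * (g y) ^ 2 + d ∧
        deriv (deriv g) y = (c - d) * g y) := by
  -- trivial cases: I or J empty
  by_cases hIe : I.Nonempty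
  swap
  · refine ⟨fun _ => 0, fun _ => 0, 1, 0, contDiffOn_const, contDiffOn_const, by norm_num,
      fun x hx => absurd ⟨x, hx⟩ hIe, fun x hx => absurd ⟨x, hx⟩ hIe, fun y _ => ?_⟩
    simp
  by_cases hJe : J.Nonempty
  swap
  · refine ⟨fun _ => 0, fun _ => 0, 0, 1, contDiffOn_const, contDiffOn_const, by norm_num,
      fun x _ y hy => absurd ⟨y, hy⟩ hJe, fun x hx => ?_, fun y hy => absurd ⟨y, hy⟩ hJe⟩
    simp
  obtain ⟨x0, hx0⟩ := hIe
  obtain ⟨y0, hy0⟩ := hJe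
  set Ω : Set (ℝ × ℝ) := I ×ˢ J with hΩdef
  have hΩ : IsOpen Ω := hI.prod hJ
  set D : ℝ × ℝ → (ℝ × ℝ) →L[ℝ] ℝ := fderiv ℝ ρ with hDdef
  have hρat : ∀ p ∈ Ω, DifferentiableAt ℝ ρ p := fun p hp =>
    (hρ.contDiffAt (hΩ.mem_nhds hp)).differentiableAt (by simp)
  have hD : ContDiffOn ℝ (⊤ : ℕ∞) D Ω := hρ.fderiv_of_isOpen hΩ (by simp)
  have hDat : ∀ p ∈ Ω, DifferentiableAt ℝ D p := fun p hp =>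
    (hD.contDiffAt (hΩ.mem_nhds hp)).differentiableAt (by simp)
  -- first partials in terms of D
  have hpdx : ∀ p ∈ Ω, pdx ρ p = D p (1, 0) := fun p hp => (aux_slice_x ρ p (hρat p hp)).deriv
  have hpdy : ∀ p ∈ Ω, pdy ρ p = D p (0, 1) := fun p hp => (aux_slice_y ρ p (hρat p hp)).deriv
  have hmem : ∀ x ∈ I, ∀ y ∈ J, ((x, y) : ℝ × ℝ) ∈ Ω := fun x hx y hy => ⟨hx, hy⟩
  -- eventual membership
  have hevx : ∀ x ∈ I, ∀ y ∈ J, ∀ᶠ t in nhds x, ((t, y) : ℝ × ℝ) ∈ Ω := by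
    intro x hx y hy
    filter_upwards [hI.eventually_mem hx] with t ht
    exact ⟨ht, hy⟩
  have hevy : ∀ x ∈ I, ∀ y ∈ J, ∀ᶠ t in nhds y, ((x, t) : ℝ × ℝ) ∈ Ω := by
    intro x hx y hy
    filter_upwards [hJ.eventually_mem hy] with t ht
    exact ⟨hx, ht⟩
  -- second partials
  have hpdxx : ∀ p ∈ Ω, pdx (pdx ρ) p = fderiv ℝ D p (1, 0) (1, 0) := by
    intro p hp
    have hev : (fun t => pdx ρ (t, p.2)) =ᶠ[nhds p.1] fun t => D (t, p.2) (1, 0) := by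
      filter_upwards [hevx p.1 hp.1 p.2 hp.2] with t ht using hpdx (t, p.2) ht
    have h1 : HasDerivAt (fun t => pdx ρ (t, p.2)) (fderiv ℝ D p (1, 0) (1, 0)) p.1 :=
      (aux_slice_x_apply D p (hDat p hp) (1, 0)).congr_of_eventuallyEq hev
    exact h1.deriv
  have hpdyx : ∀ p ∈ Ω, pdy (pdx ρ) p = fderiv ℝ D p (0, 1) (1, 0) := by
    intro p hp
    have hev : (fun t => pdx ρ (p.1, t)) =ᶠ[nhds p.2] fun t => D (p.1, t) (1, 0) := by
      filter_upwards [hevy p.1 hp.1 p.2 hp.2] with t ht using hpdx (p.1, t) ht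
    exact ((aux_slice_y_apply D p (hDat p hp) (1, 0)).congr_of_eventuallyEq hev).deriv
  have hpdxy : ∀ p ∈ Ω, pdx (pdy ρ) p = fderiv ℝ D p (1, 0) (0, 1) := by
    intro p hp
    have hev : (fun t => pdy ρ (t, p.2)) =ᶠ[nhds p.1] fun t => D (t, p.2) (0, 1) := by
      filter_upwards [hevx p.1 hp.1 p.2 hp.2] with t ht using hpdy (t, p.2) ht
    exact ((aux_slice_x_apply D p (hDat p hp) (0, 1)).congr_of_eventuallyEq hev).deriv
  have hpdyy : ∀ p ∈ Ω, pdy (pdy ρ) p = fderiv ℝ D p (0, 1) (0, 1) := by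
    intro p hp
    have hev : (fun t => pdy ρ (p.1, t)) =ᶠ[nhds p.2] fun t => D (p.1, t) (0, 1) := by
      filter_upwards [hevy p.1 hp.1 p.2 hp.2] with t ht using hpdy (p.1, t) ht
    exact ((aux_slice_y_apply D p (hDat p hp) (0, 1)).congr_of_eventuallyEq hev).deriv
  -- symmetry of second derivatives, hence pdx (pdy ρ) = 0 as well
  have hsymm : ∀ p ∈ Ω, fderiv ℝ D p (1, 0) (0, 1) = fderiv ℝ D p (0, 1) (1, 0) := by
    intro p hp
    have hf : ∀ᶠ q in nhds p, HasFDerivAt ρ (D q) q := by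
      filter_upwards [hΩ.eventually_mem hp] with q hq using (hρat q hq).hasFDerivAt
    exact second_derivative_symmetric_of_eventually hf (hDat p hp).hasFDerivAt _ _
  have hpdxy0 : ∀ p ∈ Ω, pdx (pdy ρ) p = 0 := by
    intro p hp
    rw [hpdxy p hp, hsymm p hp, ← hpdyx p hp]
    exact hpde2 p hp
  -- continuing from b.lean's context (paste test)
  set f : ℝ → ℝ := fun x => pdx ρ (x, y0) with hfdef
  set g : ℝ → ℝ := fun y => pdy ρ (x0, y) with hgdef
  -- pdx ρ depends only on x
  have hfx : ∀ x ∈ I, ∀ y ∈ J, pdx ρ (x, y) = f x := by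
    intro x hx y hy
    have hd : ∀ t ∈ J, HasDerivAt (fun s => pdx ρ (x, s)) 0 t := by
      intro t ht
      have h1 : HasDerivAt (fun s => D (x, s) (1, 0))
          (fderiv ℝ D (x, t) (0, 1) (1, 0)) t :=
        aux_slice_y_apply D (x, t) (hDat _ (hmem x hx t ht)) (1, 0)
      have h2 : (fun s => pdx ρ (x, s)) =ᶠ[nhds t] fun s => D (x, s) (1, 0) := by
        filter_upwards [hevy x hx t ht] with s hs using hpdx (x, s) hs
      have h3 := h1.congr_of_eventuallyEq h2
      rwa [← hpdyx (x, t) (hmem x hx t ht), hpde2 (x, t) (hmem x hx t ht)] at h3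
    exact aux_const_of_deriv_zero hJ hJc hd hy hy0
  have hgy : ∀ x ∈ I, ∀ y ∈ J, pdy ρ (x, y) = g y := by
    intro x hx y hy
    have hd : ∀ t ∈ I, HasDerivAt (fun s => pdy ρ (s, y)) 0 t := by
      intro t ht
      have h1 : HasDerivAt (fun s => D (s, y) (0, 1))
          (fderiv ℝ D (t, y) (1, 0) (0, 1)) t :=
        aux_slice_x_apply D (t, y) (hDat _ (hmem t ht y hy)) (0, 1)
      have h2 : (fun s => pdy ρ (s, y)) =ᶠ[nhds t] fun s => D (s, y) (0, 1) := by
        filter_upwards [hevx t ht y hy] with s hs using hpdy (s, y) hs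
      have h3 := h1.congr_of_eventuallyEq h2
      rwa [← hpdxy (t, y) (hmem t ht y hy), hpdxy0 (t, y) (hmem t ht y hy)] at h3
    exact aux_const_of_deriv_zero hI hIc hd hx hx0
  -- smoothness of f and g
  have hfs : ContDiffOn ℝ (⊤ : ℕ∞) f I := by
    have h1 : ContDiffOn ℝ (⊤ : ℕ∞) (fun x : ℝ => D (x, y0) (1, 0)) I := by
      refine ContDiffOn.clm_apply ?_ contDiffOn_const
      exact hD.comp ((contDiff_id.prodMk contDiff_const).contDiffOn)
        (fun x hx => hmem x hx y0 hy0)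
    exact h1.congr fun x hx => hpdx (x, y0) (hmem x hx y0 hy0)
  have hgs : ContDiffOn ℝ (⊤ : ℕ∞) g J := by
    have h1 : ContDiffOn ℝ (⊤ : ℕ∞) (fun y : ℝ => D (x0, y) (0, 1)) J := by
      refine ContDiffOn.clm_apply ?_ contDiffOn_const
      exact hD.comp ((contDiff_const.prodMk contDiff_id).contDiffOn)
        (fun y hy => hmem x0 hx0 y hy)
    exact h1.congr fun y hy => hpdy (x0, y) (hmem x0 hx0 y hy)
  -- derivative of f equals ρ_xx at any (x, y)
  have hfd : ∀ x ∈ I, ∀ y ∈ J, HasDerivAt f (pdx (pdx ρ) (x, y)) x := by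
    intro x hx y hy
    have h1 : HasDerivAt (fun t => D (t, y) (1, 0)) (fderiv ℝ D (x, y) (1, 0) (1, 0)) x :=
      aux_slice_x_apply D (x, y) (hDat _ (hmem x hx y hy)) (1, 0)
    have h2 : f =ᶠ[nhds x] fun t => D (t, y) (1, 0) := by
      filter_upwards [hevx x hx y hy] with t ht
      rw [← hfx t ht.1 y hy, hpdx (t, y) ht]
    rw [hpdxx (x, y) (hmem x hx y hy)]
    exact h1.congr_of_eventuallyEq h2
  have hgd : ∀ x ∈ I, ∀ y ∈ J, HasDerivAt g (pdy (pdy ρ) (x, y)) y := by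
    intro x hx y hy
    have h1 : HasDerivAt (fun t => D (x, t) (0, 1)) (fderiv ℝ D (x, y) (0, 1) (0, 1)) y :=
      aux_slice_y_apply D (x, y) (hDat _ (hmem x hx y hy)) (0, 1)
    have h2 : g =ᶠ[nhds y] fun t => D (x, t) (0, 1) := by
      filter_upwards [hevy x hx y hy] with t ht
      rw [← hgy x hx t ht.2, hpdy (x, t) ht]
    rw [hpdyy (x, y) (hmem x hx y hy)]
    exact h1.congr_of_eventuallyEq h2
  have hdf : ∀ x ∈ I, ∀ y ∈ J, deriv f x = pdx (pdx ρ) (x, y) :=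
    fun x hx y hy => (hfd x hx y hy).deriv
  have hdg : ∀ x ∈ I, ∀ y ∈ J, deriv g y = pdy (pdy ρ) (x, y) :=
    fun x hx y hy => (hgd x hx y hy).deriv
  have hfd' : ∀ x ∈ I, HasDerivAt f (deriv f x) x := fun x hx => by
    have := hfd x hx y0 hy0; rwa [← hdf x hx y0 hy0] at this
  have hgd' : ∀ y ∈ J, HasDerivAt g (deriv g y) y := fun y hy => by
    have := hgd x0 hx0 y hy; rwa [← hdg x0 hx0 y hy] at this
  -- basic pointwise relations
  have hne : ∀ x ∈ I, ∀ y ∈ J, deriv f x - deriv g y ≠ 0 := by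
    intro x hx y hy
    rw [hdf x hx y hy, hdg x hx y hy]
    exact hbox (x, y) (hmem x hx y hy)
  have heq0 : ∀ x ∈ I, ∀ y ∈ J,
      ρ (x, y) * (deriv f x - deriv g y) = f x ^ 2 - g y ^ 2 + 1 := by
    intro x hx y hy
    have := hpde1 (x, y) (hmem x hx y hy)
    rw [← hdf x hx y hy, ← hdg x hx y hy, hfx x hx y hy, hgy x hx y hy] at this
    linarith
  -- second derivatives of f and g
  have hfs1 : ContDiffOn ℝ (⊤ : ℕ∞) (deriv f) I := hfs.deriv_of_isOpen hI (by simp)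
  have hgs1 : ContDiffOn ℝ (⊤ : ℕ∞) (deriv g) J := hgs.deriv_of_isOpen hJ (by simp)
  have hfd2 : ∀ x ∈ I, HasDerivAt (deriv f) (deriv (deriv f) x) x := fun x hx =>
    (((hfs1.contDiffAt (hI.mem_nhds hx)).differentiableAt (by simp))).hasDerivAt
  have hgd2 : ∀ y ∈ J, HasDerivAt (deriv g) (deriv (deriv g) y) y := fun y hy =>
    (((hgs1.contDiffAt (hJ.mem_nhds hy)).differentiableAt (by simp))).hasDerivAt
  -- slice derivatives of ρ
  have hρx : ∀ x ∈ I, ∀ y ∈ J, HasDerivAt (fun t => ρ (t, y)) (f x) x := by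
    intro x hx y hy
    have h1 := aux_slice_x ρ (x, y) (hρat _ (hmem x hx y hy))
    rwa [show fderiv ℝ ρ (x, y) (1, 0) = f x from
      (hpdx (x, y) (hmem x hx y hy)).symm.trans (hfx x hx y hy)] at h1
  have hρy : ∀ x ∈ I, ∀ y ∈ J, HasDerivAt (fun t => ρ (x, t)) (g y) y := by
    intro x hx y hy
    have h1 := aux_slice_y ρ (x, y) (hρat _ (hmem x hx y hy))
    rwa [show fderiv ℝ ρ (x, y) (0, 1) = g y from
      (hpdy (x, y) (hmem x hx y hy)).symm.trans (hgy x hx y hy)] at h1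
  -- differentiate the main relation in x
  have eq1 : ∀ x ∈ I, ∀ y ∈ J,
      ρ (x, y) * deriv (deriv f) x = f x * (deriv f x + deriv g y) := by
    intro x hx y hy
    have hL : HasDerivAt (fun t => ρ (t, y) * (deriv f t - deriv g y))
        (f x * (deriv f x - deriv g y) + ρ (x, y) * deriv (deriv f) x) x :=
      (hρx x hx y hy).mul ((hfd2 x hx).sub_const _)
    have hR : HasDerivAt (fun t => f t ^ 2 - g y ^ 2 + 1)
        ((2 : ℕ) * f x ^ 1 * deriv f x) x :=
      (((hfd' x hx).pow 2).sub_const _).add_const _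
    have hev : (fun t => ρ (t, y) * (deriv f t - deriv g y)) =ᶠ[nhds x]
        fun t => f t ^ 2 - g y ^ 2 + 1 := by
      filter_upwards [hI.eventually_mem hx] with t ht using heq0 t ht y hy
    have h2 := (hR.congr_of_eventuallyEq hev).unique hL
    simp only [pow_one, Nat.cast_ofNat] at h2
    linear_combination -h2
  -- differentiate the main relation in y
  have eq2 : ∀ x ∈ I, ∀ y ∈ J,
      ρ (x, y) * deriv (deriv g) y = g y * (deriv f x + deriv g y) := by
    intro x hx y hy
    have hL : HasDerivAt (fun t => ρ (x, t) * (deriv f x - deriv g t))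
        (g y * (deriv f x - deriv g y) + ρ (x, y) * (0 - deriv (deriv g) y)) y :=
      (hρy x hx y hy).mul ((hasDerivAt_const y (deriv f x)).sub (hgd2 y hy))
    have hR : HasDerivAt (fun t => f x ^ 2 - g t ^ 2 + 1)
        (0 - (2 : ℕ) * g y ^ 1 * deriv g y) y :=
      (((hasDerivAt_const y (f x ^ 2)).sub ((hgd' y hy).pow 2)).add_const _)
    have hev : (fun t => ρ (x, t) * (deriv f x - deriv g t)) =ᶠ[nhds y]
        fun t => f x ^ 2 - g t ^ 2 + 1 := by
      filter_upwards [hJ.eventually_mem hy] with t ht using heq0 x hx t ht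
    have h2 := (hR.congr_of_eventuallyEq hev).unique hL
    simp only [pow_one, Nat.cast_ofNat] at h2
    linear_combination h2
  -- separation relation
  have cross : ∀ x ∈ I, ∀ y ∈ J,
      g y * deriv (deriv f) x = f x * deriv (deriv g) y := by
    intro x hx y hy
    have hρ0 : ρ (x, y) ≠ 0 := (hρpos (x, y) (hmem x hx y hy)).ne'
    have h1 : ρ (x, y) * (g y * deriv (deriv f) x) = ρ (x, y) * (f x * deriv (deriv g) y) := by
      linear_combination g y * eq1 x hx y hy - f x * eq2 x hx y hy
    exact mul_left_cancel₀ hρ0 h1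
    -- the ODE constants
  have key : ∃ c d : ℝ, c ^ 2 + d ^ 2 ≠ 0 ∧
      (∀ x ∈ I, (deriv f x) ^ 2 = (c - d) * (f x) ^ 2 + c ∧
        deriv (deriv f) x = (c - d) * f x) ∧
      (∀ y ∈ J, (deriv g y) ^ 2 = (c - d) * (g y) ^ 2 + d ∧
        deriv (deriv g) y = (c - d) * g y) := by
    by_cases hf0 : ∀ x ∈ I, f x = 0
    · -- Case A : f ≡ 0
      have hdf0 : ∀ x ∈ I, deriv f x = 0 := by
        intro x hx
        have hev : f =ᶠ[nhds x] fun _ => (0 : ℝ) := by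
          filter_upwards [hI.eventually_mem hx] with t ht using hf0 t ht
        rw [hev.deriv_eq, deriv_const]
      have hddf0 : ∀ x ∈ I, deriv (deriv f) x = 0 := by
        intro x hx
        have hev : deriv f =ᶠ[nhds x] fun _ => (0 : ℝ) := by
          filter_upwards [hI.eventually_mem hx] with t ht using hdf0 t ht
        rw [hev.deriv_eq, deriv_const]
      have hA : ∀ y ∈ J, ρ (x0, y) * deriv g y = g y ^ 2 - 1 := by
        intro y hy
        have h := heq0 x0 hx0 y hy
        rw [hdf0 x0 hx0, hf0 x0 hx0] at h
        linear_combination -h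
      have hg'ne : ∀ y ∈ J, deriv g y ≠ 0 := by
        intro y hy
        have h := hne x0 hx0 y hy
        rw [hdf0 x0 hx0] at h
        intro h0; exact h (by rw [h0, sub_zero])
      have hden : ∀ y ∈ J, g y ^ 2 - 1 ≠ 0 := by
        intro y hy
        rw [← hA y hy]
        exact mul_ne_zero (hρpos _ (hmem x0 hx0 y hy)).ne' (hg'ne y hy)
      have hB : ∀ y ∈ J, ρ (x0, y) * deriv (deriv g) y = g y * deriv g y := by
        intro y hy
        have h := eq2 x0 hx0 y hy
        rw [hdf0 x0 hx0] at h
        linear_combination h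
      have h4 : ∀ y ∈ J, deriv (deriv g) y * (g y ^ 2 - 1) = g y * (deriv g y) ^ 2 := by
        intro y hy
        rw [← hA y hy]
        linear_combination deriv g y * hB y hy
      set w : ℝ → ℝ := fun y => (deriv g y) ^ 2 / (g y ^ 2 - 1) with hwdef
      have hwc : ∀ y ∈ J, w y = w y0 := by
        intro y hy
        refine aux_const_of_deriv_zero hJ hJc ?_ hy hy0
        intro t ht
        have h1 : HasDerivAt (fun s => (deriv g s) ^ 2)
            ((2 : ℕ) * deriv g t ^ 1 * deriv (deriv g) t) t := (hgd2 t ht).pow 2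
        have h2 : HasDerivAt (fun s => g s ^ 2 - 1)
            ((2 : ℕ) * g t ^ 1 * deriv g t) t := ((hgd' t ht).pow 2).sub_const 1
        have h3 := h1.div h2 (hden t ht)
        convert h3 using 1
        · rfl
        · rfl
        · rfl
        rw [eq_comm, div_eq_zero_iff]
        left
        push_cast
        linear_combination 2 * deriv g t * h4 t ht
      set k : ℝ := w y0 with hkdef
      have hgsq : ∀ y ∈ J, (deriv g y) ^ 2 = k * (g y ^ 2 - 1) := by
        intro y hy
        have := hwc y hy
        rw [hwdef] at this
        simp only at this
        rw [div_eq_iff (hden y hy)] at this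
        exact this
      have hk0 : k ≠ 0 := by
        intro h0
        have h := hgsq y0 hy0
        rw [h0, zero_mul] at h
        exact hg'ne y0 hy0 ((pow_eq_zero_iff two_ne_zero).mp h)
      have hg'' : ∀ y ∈ J, deriv (deriv g) y = k * g y := by
        intro y hy
        refine mul_right_cancel₀ (hden y hy) ?_
        rw [h4 y hy]
        linear_combination g y * hgsq y hy
      refine ⟨0, -k, ?_, ?_, ?_⟩
      · intro h; apply hk0; nlinarith [sq_nonneg k]
      · intro x hx
        rw [hdf0 x hx, hf0 x hx, hddf0 x hx]
        norm_num
      · intro y hy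
        constructor
        · rw [hgsq y hy]; ring
        · rw [hg'' y hy]; ring
    · by_cases hg0 : ∀ y ∈ J, g y = 0
      · -- Case B : g ≡ 0
        have hdg0 : ∀ y ∈ J, deriv g y = 0 := by
          intro y hy
          have hev : g =ᶠ[nhds y] fun _ => (0 : ℝ) := by
            filter_upwards [hJ.eventually_mem hy] with t ht using hg0 t ht
          rw [hev.deriv_eq, deriv_const]
        have hddg0 : ∀ y ∈ J, deriv (deriv g) y = 0 := by
          intro y hy
          have hev : deriv g =ᶠ[nhds y] fun _ => (0 : ℝ) := by
            filter_upwards [hJ.eventually_mem hy] with t ht using hdg0 t ht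
          rw [hev.deriv_eq, deriv_const]
        have hA : ∀ x ∈ I, ρ (x, y0) * deriv f x = f x ^ 2 + 1 := by
          intro x hx
          have h := heq0 x hx y0 hy0
          rw [hdg0 y0 hy0, hg0 y0 hy0] at h
          linear_combination h
        have hden : ∀ x : ℝ, f x ^ 2 + 1 ≠ 0 := fun x => by positivity
        have hf'ne : ∀ x ∈ I, deriv f x ≠ 0 := by
          intro x hx
          have h := hne x hx y0 hy0
          rw [hdg0 y0 hy0] at h
          intro h0; exact h (by rw [h0, sub_zero])
        have hB : ∀ x ∈ I, ρ (x, y0) * deriv (deriv f) x = f x * deriv f x := by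
          intro x hx
          have h := eq1 x hx y0 hy0
          rw [hdg0 y0 hy0] at h
          linear_combination h
        have h4 : ∀ x ∈ I, deriv (deriv f) x * (f x ^ 2 + 1) = f x * (deriv f x) ^ 2 := by
          intro x hx
          rw [← hA x hx]
          linear_combination deriv f x * hB x hx
        set w : ℝ → ℝ := fun x => (deriv f x) ^ 2 / (f x ^ 2 + 1) with hwdef
        have hwc : ∀ x ∈ I, w x = w x0 := by
          intro x hx
          refine aux_const_of_deriv_zero hI hIc ?_ hx hx0
          intro t ht
          have h1 : HasDerivAt (fun s => (deriv f s) ^ 2)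
              ((2 : ℕ) * deriv f t ^ 1 * deriv (deriv f) t) t := (hfd2 t ht).pow 2
          have h2 : HasDerivAt (fun s => f s ^ 2 + 1)
              ((2 : ℕ) * f t ^ 1 * deriv f t) t := ((hfd' t ht).pow 2).add_const 1
          have h3 := h1.div h2 (hden t)
          convert h3 using 1
          · rfl
          · rfl
          · rfl
          rw [eq_comm, div_eq_zero_iff]
          left
          push_cast
          linear_combination 2 * deriv f t * h4 t ht
        set k : ℝ := w x0 with hkdef
        have hfsq : ∀ x ∈ I, (deriv f x) ^ 2 = k * (f x ^ 2 + 1) := by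
          intro x hx
          have := hwc x hx
          rw [hwdef] at this
          simp only at this
          rw [div_eq_iff (hden x)] at this
          exact this
        have hk0 : k ≠ 0 := by
          intro h0
          have h := hfsq x0 hx0
          rw [h0, zero_mul] at h
          exact hf'ne x0 hx0 ((pow_eq_zero_iff two_ne_zero).mp h)
        have hf'' : ∀ x ∈ I, deriv (deriv f) x = k * f x := by
          intro x hx
          refine mul_right_cancel₀ (hden x) ?_
          rw [h4 x hx]
          linear_combination f x * hfsq x hx
        refine ⟨k, 0, ?_, ?_, ?_⟩
        · intro h; apply hk0; nlinarith [sq_nonneg k]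
        · intro x hx
          constructor
          · rw [hfsq x hx]; ring
          · rw [hf'' x hx]; ring
        · intro y hy
          rw [hdg0 y hy, hg0 y hy, hddg0 y hy]
          norm_num
      · -- Case C : both f and g nonzero somewhere
        push_neg at hf0 hg0
        obtain ⟨x1, hx1, hfx1⟩ := hf0
        obtain ⟨y1, hy1, hgy1⟩ := hg0
        set k : ℝ := deriv (deriv f) x1 / f x1 with hkdef
        have hg'' : ∀ y ∈ J, deriv (deriv g) y = k * g y := by
          intro y hy
          rw [hkdef, div_mul_eq_mul_div, eq_div_iff hfx1]
          linear_combination -cross x1 hx1 y hy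
        have hf'' : ∀ x ∈ I, deriv (deriv f) x = k * f x := by
          intro x hx
          refine mul_left_cancel₀ hgy1 ?_
          linear_combination cross x hx y1 hy1 + f x * hg'' y1 hy1
        set c : ℝ := (deriv f x1) ^ 2 - k * (f x1) ^ 2 with hcdef
        set d : ℝ := (deriv g y1) ^ 2 - k * (g y1) ^ 2 with hddef2
        have hc : ∀ x ∈ I, (deriv f x) ^ 2 - k * (f x) ^ 2 = c := by
          intro x hx
          exact aux_const_of_deriv_zero hI hIc (fun t ht => by
            have h1 : HasDerivAt (fun s => (deriv f s) ^ 2 - k * f s ^ 2)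
                ((2 : ℕ) * deriv f t ^ 1 * deriv (deriv f) t -
                  k * ((2 : ℕ) * f t ^ 1 * deriv f t)) t :=
              ((hfd2 t ht).pow 2).sub (((hfd' t ht).pow 2).const_mul k)
            convert h1 using 1
            rw [eq_comm]
            push_cast
            linear_combination 2 * deriv f t * hf'' t ht) hx hx1
        have hd : ∀ y ∈ J, (deriv g y) ^ 2 - k * (g y) ^ 2 = d := by
          intro y hy
          exact aux_const_of_deriv_zero hJ hJc (fun t ht => by
            have h1 : HasDerivAt (fun s => (deriv g s) ^ 2 - k * g s ^ 2)
                ((2 : ℕ) * deriv g t ^ 1 * deriv (deriv g) t -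
                  k * ((2 : ℕ) * g t ^ 1 * deriv g t)) t :=
              ((hgd2 t ht).pow 2).sub (((hgd' t ht).pow 2).const_mul k)
            convert h1 using 1
            rw [eq_comm]
            push_cast
            linear_combination 2 * deriv g t * hg'' t ht) hy hy1
        have hsum : ρ (x1, y1) * k = deriv f x1 + deriv g y1 := by
          refine mul_left_cancel₀ hfx1 ?_
          have h := eq1 x1 hx1 y1 hy1
          rw [hf'' x1 hx1] at h
          linear_combination h
        have hkcd : c - d = k := by
          rw [hcdef, hddef2]
          linear_combination k * heq0 x1 hx1 y1 hy1 -
            (deriv f x1 - deriv g y1) * hsum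
        refine ⟨c, d, ?_, ?_, ?_⟩
        · intro h
          have hc0 : c = 0 := by nlinarith [sq_nonneg c, sq_nonneg d]
          have hd0 : d = 0 := by nlinarith [sq_nonneg c, sq_nonneg d]
          have hk00 : k = 0 := by rw [← hkcd, hc0, hd0]; ring
          have h1 : (deriv f x1) ^ 2 = 0 := by
            have := hc x1 hx1; rw [hc0, hk00] at this; linarith [this]
          have h2 : (deriv g y1) ^ 2 = 0 := by
            have := hd y1 hy1; rw [hd0, hk00] at this; linarith [this]
          have := hne x1 hx1 y1 hy1
          rw [pow_eq_zero_iff (two_ne_zero)] at h1 h2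
          exact this (by rw [h1, h2, sub_zero])
        · intro x hx
          rw [hkcd]
          exact ⟨by linear_combination hc x hx, hf'' x hx⟩
        · intro y hy
          rw [hkcd]
          exact ⟨by linear_combination hd y hy, hg'' y hy⟩
  obtain ⟨c, d, hcd, hfODE, hgODE⟩ := key
  refine ⟨f, g, c, d, hfs, hgs, hcd, ?_, hfODE, hgODE⟩
  intro x hx y hy
  refine ⟨hfx x hx y hy, hgy x hx y hy, hne x hx y hy, ?_⟩
  rw [eq_comm, div_eq_iff (hne x hx y hy), eq_comm]
  exact heq0 x hx y hy
end
end

section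
/- Let c, d ∈ ℝ with c² + d² ≠ 0 and let f : ℝ → ℝ be a smooth function satisfying (f′)² = (c−d)f² + c and f″ = (c−d)f on all of ℝ. Then f has a zero (i.e. there exists x₀ ∈ ℝ with f(x₀) = 0) if and only if c > 0 or f is identically zero. -/
noncomputable section

/-- If the derivative of `f` is at least `m > 0` on `(-∞, a]`, then `f` takes a
nonpositive value. -/
lemma fODE_aux_le (f : ℝ → ℝ) (hd : Differentiable ℝ f) {m : ℝ} (hm : 0 < m) (a : ℝ)
    (h : ∀ x, x ≤ a → m ≤ deriv f x) : ∃ x, f x ≤ 0 := by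
  by_cases hfa : f a ≤ 0
  · exact ⟨a, hfa⟩
  push_neg at hfa
  set g : ℝ → ℝ := fun x => f x - m * x with hg
  have hgd : Differentiable ℝ g := hd.sub (differentiable_id.const_mul m)
  have hderiv : ∀ x, deriv g x = deriv f x - m := by
    intro x
    have h1 : HasDerivAt g (deriv f x - m * 1) x :=
      ((hd x).hasDerivAt).sub ((hasDerivAt_id x).const_mul m)
    simpa using h1.deriv
  have hmono : MonotoneOn g (Set.Iic a) := by
    apply monotoneOn_of_deriv_nonneg (convex_Iic a) hgd.continuous.continuousOn
      hgd.differentiableOn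
    intro x hx
    rw [interior_Iic] at hx
    rw [hderiv x]
    linarith [h x hx.le]
  set x : ℝ := a - f a / m - 1 with hx
  have hfam : 0 < f a / m := div_pos hfa hm
  have hxa : x ≤ a := by rw [hx]; linarith
  have hle := hmono (Set.mem_Iic.2 hxa) (Set.mem_Iic.2 (le_refl a)) hxa
  refine ⟨x, ?_⟩
  have hgx : f x - m * x ≤ f a - m * a := hle
  have hmx : m * x = m * a - f a - m := by
    rw [hx]
    field_simp
  linarith

/-- If the derivative of `f` is at most `-m < 0` on `[a, ∞)`, then `f` takes a
nonpositive value. -/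
lemma fODE_aux_ge (f : ℝ → ℝ) (hd : Differentiable ℝ f) {m : ℝ} (hm : 0 < m) (a : ℝ)
    (h : ∀ x, a ≤ x → deriv f x ≤ -m) : ∃ x, f x ≤ 0 := by
  have hd' : Differentiable ℝ (fun x => f (-x)) := hd.comp differentiable_neg
  obtain ⟨x, hx⟩ := fODE_aux_le (fun x => f (-x)) hd' hm (-a) (by
    intro x hx
    rw [deriv_comp_neg]
    have : a ≤ -x := by linarith
    linarith [h (-x) this])
  exact ⟨-x, hx⟩

/-- A positive solution of the f-ODE system forces `c ≤ 0`. -/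
lemma fODE_pos_absurd (c d : ℝ) (hc : 0 < c)
    (f : ℝ → ℝ) (hf : ContDiff ℝ (⊤ : ℕ∞) f)
    (hode1 : ∀ x : ℝ, (deriv f x) ^ 2 = (c - d) * (f x) ^ 2 + c)
    (hode2 : ∀ x : ℝ, deriv (deriv f) x = (c - d) * f x)
    (hpos : ∀ x, 0 < f x) : False := by
  have hf' : ContDiff ℝ (⊤ : ℕ∞) f := hf.of_le (by simp)
  have hd : Differentiable ℝ f := hf'.differentiable (by simp)
  have hcd : Continuous (deriv f) := hf'.continuous_deriv (by exact_mod_cast le_top)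
  suffices hz : ∃ x, f x ≤ 0 by
    obtain ⟨x, hx⟩ := hz
    exact absurd (hpos x) (not_lt.2 hx)
  rcases le_or_gt 0 (c - d) with hk | hk
  · -- (f')² ≥ c > 0 everywhere
    have hne : ∀ x, deriv f x ≠ 0 := by
      intro x hx
      have h1 := hode1 x
      rw [hx] at h1
      nlinarith [mul_nonneg hk (sq_nonneg (f x))]
    have hbig : ∀ x, Real.sqrt c ≤ |deriv f x| := by
      intro x
      rw [← Real.sqrt_sq_eq_abs]
      apply Real.sqrt_le_sqrt
      nlinarith [hode1 x, mul_nonneg hk (sq_nonneg (f x))]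
    have hsqrt : 0 < Real.sqrt c := Real.sqrt_pos.2 hc
    rcases lt_or_gt_of_ne (hne 0) with h0 | h0
    · -- deriv f < 0 everywhere
      have hall : ∀ x, deriv f x < 0 := by
        intro x
        by_contra hge
        push_neg at hge
        have h0m : (0 : ℝ) ∈ Set.uIcc (deriv f 0) (deriv f x) :=
          Set.mem_uIcc.2 (Or.inl ⟨h0.le, hge⟩)
        obtain ⟨y, _, hy⟩ := intermediate_value_uIcc hcd.continuousOn h0m
        exact hne y hy
      apply fODE_aux_ge f hd hsqrt 0
      intro x _
      have := hbig x
      rw [abs_of_neg (hall x)] at this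
      linarith
    · -- deriv f > 0 everywhere
      have hall : ∀ x, 0 < deriv f x := by
        intro x
        by_contra hge
        push_neg at hge
        have h0m : (0 : ℝ) ∈ Set.uIcc (deriv f 0) (deriv f x) :=
          Set.mem_uIcc.2 (Or.inr ⟨hge, h0.le⟩)
        obtain ⟨y, _, hy⟩ := intermediate_value_uIcc hcd.continuousOn h0m
        exact hne y hy
      apply fODE_aux_le f hd hsqrt 0
      intro x _
      have := hbig x
      rw [abs_of_pos (hall x)] at this
      linarith
  · -- c - d < 0 : f'' < 0, so f' is strictly antitone
    have hanti : StrictAnti (deriv f) := by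
      apply strictAnti_of_deriv_neg
      intro x
      rw [hode2 x]
      exact mul_neg_of_neg_of_pos hk (hpos x)
    rcases lt_or_ge 0 (deriv f 0) with h0 | h0
    · apply fODE_aux_le f hd h0 0
      intro x hx
      exact hanti.antitone hx
    · have h1 : deriv f 1 < 0 := lt_of_lt_of_le (hanti zero_lt_one) h0
      apply fODE_aux_ge f hd (m := -(deriv f 1)) (by linarith) 1
      intro x hx
      have := hanti.antitone hx
      linarith

/-- For the f-ODE system (f′)² = (c−d)f² + c, f″ = (c−d)f with c² + d² ≠ 0,
f has a zero if and only if c > 0 or f ≡ 0. -/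
theorem fODE_has_zero_iff (c d : ℝ) (hcd : c ^ 2 + d ^ 2 ≠ 0)
    (f : ℝ → ℝ) (hf : ContDiff ℝ (⊤ : ℕ∞) f)
    (hode1 : ∀ x : ℝ, (deriv f x) ^ 2 = (c - d) * (f x) ^ 2 + c)
    (hode2 : ∀ x : ℝ, deriv (deriv f) x = (c - d) * f x) :
    (∃ x₀ : ℝ, f x₀ = 0) ↔ (0 < c ∨ ∀ x : ℝ, f x = 0) := by
  have hf' : ContDiff ℝ (⊤ : ℕ∞) f := hf.of_le (by simp)
  have hd : Differentiable ℝ f := hf'.differentiable (by simp)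
  have hdf : Differentiable ℝ (deriv f) :=
    ((contDiff_infty_iff_deriv.mp hf').2).differentiable (by simp)
  constructor
  · rintro ⟨x₀, hx₀⟩
    have hc0 : c = (deriv f x₀) ^ 2 := by
      have h1 := hode1 x₀
      rw [hx₀] at h1
      simpa using h1.symm
    have hcnn : 0 ≤ c := hc0 ▸ sq_nonneg _
    rcases hcnn.lt_or_eq with h | h
    · exact Or.inl h
    · right
      have hc : c = 0 := h.symm
      have hd0 : d ≠ 0 := by
        intro hd0
        exact hcd (by rw [hc, hd0]; ring)
      have hf'0 : deriv f x₀ = 0 := by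
        have : (deriv f x₀) ^ 2 = 0 := by rw [← hc0, hc]
        exact pow_eq_zero_iff (n := 2) (by norm_num) |>.mp this
      rcases lt_or_gt_of_ne hd0 with hdneg | hdpos
      · -- d < 0, so k := c - d > 0; use exponential integrating factors
        set k : ℝ := c - d with hkdef
        have hk : 0 < k := by rw [hkdef, hc]; linarith
        set s : ℝ := Real.sqrt k with hsdef
        have hs : 0 < s := Real.sqrt_pos.2 hk
        have hs2 : s ^ 2 = k := Real.sq_sqrt hk.le
        set u : ℝ → ℝ := fun x => (deriv f x - s * f x) * Real.exp (s * x) with hudef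
        set v : ℝ → ℝ := fun x => (deriv f x + s * f x) * Real.exp (-(s * x)) with hvdef
        have hexp : ∀ x : ℝ, ∀ t : ℝ, HasDerivAt (fun y => Real.exp (t * y))
            (Real.exp (t * x) * (t * 1)) x := by
          intro x t
          exact ((hasDerivAt_id x).const_mul t).exp
        have hf2 : ∀ x, HasDerivAt (deriv f) (k * f x) x := by
          intro x
          have := (hdf x).hasDerivAt
          rwa [hode2 x] at this
        have hu : ∀ x, HasDerivAt u 0 x := by
          intro x
          have h1 : HasDerivAt f (deriv f x) x := (hd x).hasDerivAt
          have h3 := ((hf2 x).sub (h1.const_mul s)).mul (hexp x s)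
          convert h3 using 1
          case e'_4 => rfl
          case e'_5 => rfl
          case e'_8 => rfl
          have hks : k = s ^ 2 := hs2.symm
          rw [hks]
          simp only [Pi.sub_apply]
          ring
        have hv : ∀ x, HasDerivAt v 0 x := by
          intro x
          have h1 : HasDerivAt f (deriv f x) x := (hd x).hasDerivAt
          have hexp' : HasDerivAt (fun y => Real.exp (-(s * y)))
              (Real.exp (-(s * x)) * (-s * 1)) x := by
            have := hexp x (-s)
            simpa [neg_mul] using this
          have h3 := ((hf2 x).add (h1.const_mul s)).mul hexp'
          convert h3 using 1
          case e'_4 => rfl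
          case e'_5 => rfl
          case e'_8 => rfl
          have hks : k = s ^ 2 := hs2.symm
          rw [hks]
          simp only [Pi.add_apply]
          ring
        have hu0 : u x₀ = 0 := by simp [hudef, hx₀, hf'0]
        have hv0 : v x₀ = 0 := by simp [hvdef, hx₀, hf'0]
        have huconst := is_const_of_deriv_eq_zero (f := u)
          (fun x => (hu x).differentiableAt) (fun x => (hu x).deriv)
        have hvconst := is_const_of_deriv_eq_zero (f := v)
          (fun x => (hv x).differentiableAt) (fun x => (hv x).deriv)
        intro x
        have hux : u x = 0 := (huconst x x₀).trans hu0
        have hvx : v x = 0 := (hvconst x x₀).trans hv0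
        have he1 : Real.exp (s * x) ≠ 0 := (Real.exp_pos _).ne'
        have he2 : Real.exp (-(s * x)) ≠ 0 := (Real.exp_pos _).ne'
        have h1 : deriv f x - s * f x = 0 := by
          have := mul_eq_zero.mp hux
          tauto
        have h2 : deriv f x + s * f x = 0 := by
          have := mul_eq_zero.mp hvx
          tauto
        have : s * f x = 0 := by linarith
        rcases mul_eq_zero.mp this with h | h
        · exact absurd h hs.ne'
        · exact h
      · -- d > 0 : (f')² = -d f² forces f ≡ 0
        intro x
        have h1 := hode1 x
        rw [hc] at h1
        have hsq : (f x) ^ 2 ≤ 0 := by nlinarith [sq_nonneg (deriv f x)]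
        have : (f x) ^ 2 = 0 := le_antisymm hsq (sq_nonneg _)
        exact pow_eq_zero_iff (n := 2) (by norm_num) |>.mp this
  · rintro (hc | hzero)
    · by_contra hno
      push_neg at hno
      have hcont : Continuous f := hf.continuous
      have hsign : (∀ x, 0 < f x) ∨ (∀ x, f x < 0) := by
        rcases lt_or_gt_of_ne (hno 0) with h0 | h0
        · right
          intro x
          by_contra h
          push_neg at h
          have h0m : (0 : ℝ) ∈ Set.uIcc (f 0) (f x) := Set.mem_uIcc.2 (Or.inl ⟨h0.le, h⟩)
          obtain ⟨y, _, hy⟩ := intermediate_value_uIcc hcont.continuousOn h0m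
          exact hno y hy
        · left
          intro x
          by_contra h
          push_neg at h
          have h0m : (0 : ℝ) ∈ Set.uIcc (f 0) (f x) := Set.mem_uIcc.2 (Or.inr ⟨h, h0.le⟩)
          obtain ⟨y, _, hy⟩ := intermediate_value_uIcc hcont.continuousOn h0m
          exact hno y hy
      rcases hsign with hp | hn
      · exact fODE_pos_absurd c d hc f hf hode1 hode2 hp
      · have hderivneg : deriv (fun x => -f x) = fun x => -deriv f x := deriv.neg'
        apply fODE_pos_absurd c d hc (fun x => -f x) hf.neg ?_ ?_
          (fun x => neg_pos.2 (hn x))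
        · intro x
          rw [hderivneg]
          have := hode1 x
          simpa [neg_pow] using this
        · intro x
          rw [hderivneg]
          have : deriv (fun x => -deriv f x) x = -deriv (deriv f) x := deriv.neg
          rw [this, hode2 x]
          ring
    · exact ⟨0, hzero 0⟩
end
end

section
/- Let c, d ∈ ℝ with c² + d² ≠ 0 and let f : ℝ → ℝ be a smooth function satisfying (f′)² = (c−d)f² + c and f″ = (c−d)f on all of ℝ. Then f has no zero on ℝ if and only if either c < 0, or c = 0, d < 0, and there exist a constant C ≠ 0 and ε ∈ {−1, 1} such that f(x) = C·e^{ε√(−d)·x} for all x ∈ ℝ. -/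
noncomputable section

private lemma sign_const {f : ℝ → ℝ} (hf : Continuous f) (hne : ∀ x : ℝ, f x ≠ 0) :
    (∀ x, 0 < f x) ∨ (∀ x, f x < 0) := by
  by_contra h
  push_neg at h
  obtain ⟨⟨a, ha⟩, ⟨b, hb⟩⟩ := h
  have ha' : f a < 0 := lt_of_le_of_ne ha (hne a)
  have hb' : 0 < f b := lt_of_le_of_ne hb (Ne.symm (hne b))
  have h0 : (0 : ℝ) ∈ Set.uIcc (f a) (f b) := by
    rw [Set.mem_uIcc]; left; exact ⟨ha'.le, hb'.le⟩
  obtain ⟨x, _, hx⟩ := intermediate_value_uIcc (f := f) (a := a) (b := b) hf.continuousOn h0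
  exact hne x hx

private lemma pos_case {c d : ℝ} (hcd : c - d < 0) {f : ℝ → ℝ}
    (hfd : Differentiable ℝ f) (hfd2 : Differentiable ℝ (deriv f))
    (hode2 : ∀ x : ℝ, deriv (deriv f) x = (c - d) * f x)
    (hpos : ∀ x : ℝ, 0 < f x) : False := by
  have hanti : StrictAnti (deriv f) :=
    strictAnti_of_deriv_neg fun x => by
      rw [hode2 x]; exact mul_neg_of_neg_of_pos hcd (hpos x)
  obtain ⟨x₁, hx₁⟩ : ∃ x, deriv f x ≠ 0 := by
    by_contra h
    push_neg at h
    have h0 : deriv (deriv f) 0 = 0 := by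
      rw [funext h]
      exact deriv_const 0 0
    rw [hode2 0] at h0
    rcases mul_eq_zero.mp h0 with h1 | h2
    · exact hcd.ne h1
    · exact (hpos 0).ne' h2
  have mvt : ∀ a b : ℝ, a < b → ∃ ξ ∈ Set.Ioo a b, deriv f ξ = (f b - f a) / (b - a) :=
    fun a b hab => exists_deriv_eq_slope f hab hfd.continuous.continuousOn hfd.differentiableOn
  rcases lt_or_gt_of_ne hx₁ with hneg | hposd
  · set x := x₁ + f x₁ / (-deriv f x₁) + 1 with hxdef
    have hd0 : 0 < f x₁ / (-deriv f x₁) := div_pos (hpos x₁) (neg_pos.mpr hneg)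
    have hlt : x₁ < x := by rw [hxdef]; linarith
    obtain ⟨ξ, hξ, hs⟩ := mvt x₁ x hlt
    have hξlt : deriv f ξ < deriv f x₁ := hanti hξ.1
    have hxx : f x - f x₁ = deriv f ξ * (x - x₁) := by
      rw [hs, div_mul_cancel₀ _ (sub_ne_zero.mpr hlt.ne')]
    have h2 : f x < f x₁ + deriv f x₁ * (x - x₁) := by nlinarith
    have h3 : deriv f x₁ * (x - x₁) = -f x₁ + deriv f x₁ := by
      rw [hxdef]
      field_simp [hneg.ne]
      ring
    linarith [hpos x]
  · set x := x₁ - f x₁ / deriv f x₁ - 1 with hxdef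
    have hd0 : 0 < f x₁ / deriv f x₁ := div_pos (hpos x₁) hposd
    have hlt : x < x₁ := by rw [hxdef]; linarith
    obtain ⟨ξ, hξ, hs⟩ := mvt x x₁ hlt
    have hξgt : deriv f x₁ < deriv f ξ := hanti hξ.2
    have hxx : f x₁ - f x = deriv f ξ * (x₁ - x) := by
      rw [hs, div_mul_cancel₀ _ (sub_ne_zero.mpr hlt.ne')]
    have h2 : f x < f x₁ - deriv f x₁ * (x₁ - x) := by nlinarith
    have h3 : deriv f x₁ * (x₁ - x) = f x₁ + deriv f x₁ := by
      rw [hxdef]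
      field_simp [hposd.ne']
      ring
    linarith [hpos x]

private lemma cross_of_deriv_ge {k : ℝ} (hk : 0 < k) {f : ℝ → ℝ}
    (hfd : Differentiable ℝ f) (h : ∀ x : ℝ, k ≤ deriv f x) :
    (∃ a : ℝ, f a < 0) ∧ (∃ b : ℝ, 0 < f b) := by
  set T := (|f 0| + 1) / k with hT
  have hT0 : 0 < T := div_pos (by positivity) hk
  have hkT : k * T = |f 0| + 1 := by
    rw [hT]; field_simp
  constructor
  · obtain ⟨ξ, hξ, hs⟩ := exists_deriv_eq_slope f (show -T < 0 by linarith)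
      hfd.continuous.continuousOn hfd.differentiableOn
    have h1 := h ξ
    rw [hs, show (0 : ℝ) - -T = T by ring] at h1
    have h2 : k * T ≤ f 0 - f (-T) := (le_div_iff₀ hT0).mp h1
    exact ⟨-T, by nlinarith [le_abs_self (f 0)]⟩
  · obtain ⟨ξ, hξ, hs⟩ := exists_deriv_eq_slope f hT0
      hfd.continuous.continuousOn hfd.differentiableOn
    have h1 := h ξ
    rw [hs, show T - 0 = T by ring] at h1
    have h2 : k * T ≤ f T - f 0 := (le_div_iff₀ hT0).mp h1
    exact ⟨T, by nlinarith [neg_abs_le (f 0)]⟩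

private lemma exp_sol {a : ℝ} {f : ℝ → ℝ} (hfd : Differentiable ℝ f)
    (h : ∀ x : ℝ, deriv f x = a * f x) : ∀ x : ℝ, f x = f 0 * Real.exp (a * x) := by
  have hgd : ∀ y : ℝ, HasDerivAt (fun x => f x * Real.exp (-(a * x)))
      (deriv f y * Real.exp (-(a * y)) + f y * (Real.exp (-(a * y)) * -a)) y := by
    intro y
    have h1 : HasDerivAt f (deriv f y) y := (hfd y).hasDerivAt
    have h2 : HasDerivAt (fun x : ℝ => -(a * x)) (-a) y := by
      simpa using ((hasDerivAt_id' y).const_mul a).fun_neg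
    exact h1.mul h2.exp
  have hg0 : ∀ y : ℝ, deriv (fun x => f x * Real.exp (-(a * x))) y = 0 := by
    intro y
    rw [(hgd y).deriv, h y]
    ring
  have hgdiff : Differentiable ℝ (fun x => f x * Real.exp (-(a * x))) :=
    fun y => (hgd y).differentiableAt
  intro x
  have hconst := is_const_of_deriv_eq_zero hgdiff hg0 x 0
  simp only [mul_zero, neg_zero, Real.exp_zero, mul_one] at hconst
  have hexp : Real.exp (-(a * x)) * Real.exp (a * x) = 1 := by
    rw [← Real.exp_add]; simp
  calc f x = f x * (Real.exp (-(a * x)) * Real.exp (a * x)) := by rw [hexp, mul_one]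
    _ = f 0 * Real.exp (a * x) := by rw [← mul_assoc, hconst]

/-- For the f-ODE system (f′)² = (c−d)f² + c, f″ = (c−d)f with c² + d² ≠ 0,
f has no zero if and only if either c < 0, or c = 0, d < 0 and f(x) = C e^{±√(−d) x}
for some constant C ≠ 0. -/
theorem fODE_no_zero_iff (c d : ℝ) (hcd : c ^ 2 + d ^ 2 ≠ 0)
    (f : ℝ → ℝ) (hf : ContDiff ℝ (⊤ : ℕ∞) f)
    (hode1 : ∀ x : ℝ, (deriv f x) ^ 2 = (c - d) * (f x) ^ 2 + c)
    (hode2 : ∀ x : ℝ, deriv (deriv f) x = (c - d) * f x) :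
    (∀ x : ℝ, f x ≠ 0) ↔
      (c < 0 ∨ (c = 0 ∧ d < 0 ∧ ∃ C : ℝ, C ≠ 0 ∧ ∃ ε : ℝ, (ε = -1 ∨ ε = 1) ∧
        ∀ x : ℝ, f x = C * Real.exp (ε * Real.sqrt (-d) * x))) := by
  have hfd : Differentiable ℝ f := hf.differentiable (by simp)
  have hfd2 : Differentiable ℝ (deriv f) :=
    (contDiff_infty_iff_deriv.mp (hf.of_le (by simp))).2.differentiable (by simp)
  constructor
  · intro hne
    rcases lt_trichotomy c 0 with hc | hc | hc
    · exact Or.inl hc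
    · -- c = 0
      right
      subst hc
      have hd : d ≠ 0 := by
        intro h; apply hcd; rw [h]; ring
      have hdneg : d < 0 := by
        rcases lt_or_gt_of_ne hd with h | h
        · exact h
        · exfalso
          have h1 := hode1 0
          have h2 := hne 0
          nlinarith [sq_nonneg (deriv f 0), sq_pos_of_ne_zero h2]
      refine ⟨rfl, hdneg, f 0, hne 0, ?_⟩
      set k := Real.sqrt (-d) with hkdef
      have hk : 0 < k := Real.sqrt_pos.mpr (by linarith)
      have hk2 : k ^ 2 = -d := Real.sq_sqrt (by linarith)
      have hpt : ∀ x, deriv f x = k * f x ∨ deriv f x = -(k * f x) := by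
        intro x
        have h1 := hode1 x
        have hfac : (deriv f x - k * f x) * (deriv f x + k * f x) = 0 := by nlinarith
        rcases mul_eq_zero.mp hfac with h | h
        · left; linarith
        · right; linarith
      have hne' : ∀ x, deriv f x * f x ≠ 0 := by
        intro x
        have hfx := hne x
        have hd' : deriv f x ≠ 0 := by
          rcases hpt x with h | h <;> rw [h]
          · exact mul_ne_zero hk.ne' hfx
          · exact neg_ne_zero.mpr (mul_ne_zero hk.ne' hfx)
        exact mul_ne_zero hd' hfx
      have hcont : Continuous (fun x => deriv f x * f x) := hfd2.continuous.mul hfd.continuous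
      rcases sign_const hcont hne' with hall | hall
      · refine ⟨1, Or.inr rfl, ?_⟩
        have hlin : ∀ x, deriv f x = k * f x := by
          intro x
          rcases hpt x with h | h
          · exact h
          · exfalso
            have h2 := hall x
            rw [h] at h2
            nlinarith [sq_pos_of_ne_zero (hne x)]
        intro x
        have := exp_sol hfd hlin x
        rw [this]
        norm_num
      · refine ⟨-1, Or.inl rfl, ?_⟩
        have hlin : ∀ x, deriv f x = (-k) * f x := by
          intro x
          rcases hpt x with h | h
          · exfalso
            have h2 := hall x
            rw [h] at h2
            nlinarith [sq_pos_of_ne_zero (hne x)]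
          · rw [h]; ring
        intro x
        have := exp_sol hfd hlin x
        rw [this]
        ring_nf
    · -- c > 0
      exfalso
      rcases lt_or_ge (c - d) 0 with hcdneg | hcdpos
      · -- oscillatory/concave case
        rcases sign_const hfd.continuous hne with hall | hall
        · exact pos_case hcdneg hfd hfd2 hode2 hall
        · have hng : deriv (fun y => -f y) = fun y => -deriv f y :=
            funext fun y => deriv.neg
          have hg2 : ∀ x, deriv (deriv (fun y => -f y)) x = (c - d) * (-f x) := by
            intro x
            rw [hng, deriv.fun_neg, hode2]
            ring
          have hgd2 : Differentiable ℝ (deriv (fun y => -f y)) := by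
            rw [hng]; exact hfd2.neg
          exact pos_case hcdneg hfd.neg hgd2 hg2 (fun x => neg_pos.mpr (hall x))
      · -- c - d ≥ 0
        have hfne : ∀ x, deriv f x ≠ 0 := by
          intro x h
          have h1 := hode1 x
          rw [h] at h1
          nlinarith [sq_nonneg (f x)]
        have hsc : 0 < Real.sqrt c := Real.sqrt_pos.mpr hc
        rcases sign_const hfd2.continuous hfne with hall | hall
        · have hge : ∀ x, Real.sqrt c ≤ deriv f x := by
            intro x
            have h2 : c ≤ (deriv f x) ^ 2 := by nlinarith [sq_nonneg (f x), hode1 x]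
            calc Real.sqrt c ≤ Real.sqrt ((deriv f x) ^ 2) := Real.sqrt_le_sqrt h2
              _ = |deriv f x| := Real.sqrt_sq_eq_abs _
              _ = deriv f x := abs_of_pos (hall x)
          obtain ⟨⟨a, ha⟩, ⟨b, hb⟩⟩ := cross_of_deriv_ge hsc hfd hge
          rcases sign_const hfd.continuous hne with h | h
          · exact absurd ha (not_lt.mpr (h a).le)
          · exact absurd hb (not_lt.mpr (h b).le)
        · have hng : deriv (fun y => -f y) = fun y => -deriv f y :=
            funext fun y => deriv.neg
          have hge : ∀ x, Real.sqrt c ≤ deriv (fun y => -f y) x := by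
            intro x
            rw [hng]
            have h2 : c ≤ (deriv f x) ^ 2 := by nlinarith [sq_nonneg (f x), hode1 x]
            calc Real.sqrt c ≤ Real.sqrt ((deriv f x) ^ 2) := Real.sqrt_le_sqrt h2
              _ = |deriv f x| := Real.sqrt_sq_eq_abs _
              _ = -deriv f x := abs_of_neg (hall x)
          obtain ⟨⟨a, ha⟩, ⟨b, hb⟩⟩ := cross_of_deriv_ge hsc hfd.neg hge
          simp only [Pi.neg_apply, neg_lt_zero, neg_pos] at ha hb
          rcases sign_const hfd.continuous hne with h | h
          · exact absurd hb (not_lt.mpr (h b).le)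
          · exact absurd ha (not_lt.mpr (h a).le)
  · rintro (hc | ⟨hc0, hdneg, C, hC, ε, hε, hsol⟩) x
    · intro hx
      have h1 := hode1 x
      rw [hx] at h1
      nlinarith [sq_nonneg (deriv f x)]
    · rw [hsol x]
      exact mul_ne_zero hC (Real.exp_ne_zero _)
end
end

section
/- Let c, d ∈ ℝ with c² + d² ≠ 0 and let g : ℝ → ℝ be a smooth function, not identically zero, satisfying (g′)² = (c−d)g² + d and g″ = (c−d)g on all of ℝ. Then there exists y₀ ∈ ℝ with g(y₀)² = 1 if and only if c ≥ 0. -/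
noncomputable section

open Real

private lemma const_aux {f : ℝ → ℝ} (hf : ∀ y, HasDerivAt f 0 y) (y : ℝ) : f y = f 0 :=
  is_const_of_deriv_eq_zero (fun x => (hf x).differentiableAt) (fun x => (hf x).deriv) y 0

private lemma ivt_one {g : ℝ → ℝ} (hc : Continuous fun y => g y ^ 2) {p q : ℝ}
    (hp : g p ^ 2 ≤ 1) (hq : 1 ≤ g q ^ 2) : ∃ y₀, g y₀ ^ 2 = 1 := by
  obtain ⟨y₀, _, h⟩ := intermediate_value_uIcc (a := p) (b := q)
    (f := fun y => g y ^ 2) hc.continuousOn (Set.mem_uIcc.mpr (Or.inl ⟨hp, hq⟩))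
  exact ⟨y₀, h⟩

private lemma trig_zero (ω α β : ℝ) (hω : ω ≠ 0) :
    ∃ y, α * Real.cos (ω * y) + β * Real.sin (ω * y) = 0 := by
  by_cases hβ : β = 0
  · refine ⟨(Real.pi / 2) / ω, ?_⟩
    rw [mul_div_cancel₀ _ hω]
    simp [hβ]
  · refine ⟨Real.arctan (-α / β) / ω, ?_⟩
    rw [mul_div_cancel₀ _ hω]
    have hcos : Real.cos (Real.arctan (-α / β)) ≠ 0 := (Real.cos_arctan_pos _).ne'
    have htan := Real.tan_eq_sin_div_cos (Real.arctan (-α / β))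
    rw [Real.tan_arctan] at htan
    field_simp at htan
    rw [← neg_div] at htan
    linear_combination -htan

private lemma exp_ge' (ω A B : ℝ) (hω : 0 < ω) (hA : A ≠ 0) :
    ∃ q, 1 ≤ (A * Real.exp (ω * q) + B * Real.exp (-(ω * q))) ^ 2 := by
  set t : ℝ := max (Real.log ((1 + |B|) / |A|)) 0 with ht_def
  have ht0 : 0 ≤ t := le_max_right _ _
  refine ⟨t / ω, ?_⟩
  have ht : ω * (t / ω) = t := by field_simp
  rw [ht]
  have hApos : 0 < |A| := abs_pos.mpr hA
  have hE : (1 + |B|) / |A| ≤ Real.exp t := by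
    calc (1 + |B|) / |A| = Real.exp (Real.log ((1 + |B|) / |A|)) :=
          (Real.exp_log (by positivity)).symm
      _ ≤ Real.exp t := Real.exp_le_exp.mpr (le_max_left _ _)
  have hAE : 1 + |B| ≤ |A| * Real.exp t := by
    rw [div_le_iff₀ hApos] at hE; linarith
  have hF : Real.exp (-t) ≤ 1 := Real.exp_le_one_iff.mpr (by linarith)
  have hFpos : 0 < Real.exp (-t) := Real.exp_pos _
  have hEpos : 0 < Real.exp t := Real.exp_pos _
  have hB0 : 0 ≤ |B| := abs_nonneg _
  have key : 1 ≤ |A| * Real.exp t - |B| * Real.exp (-t) := by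
    nlinarith
  have habs : -(|A| * |B|) ≤ A * B := by
    rw [← abs_mul]; exact neg_abs_le _
  have h1 : 0 ≤ (A * B + |A| * |B|) * (Real.exp t * Real.exp (-t)) :=
    mul_nonneg (by linarith) (mul_pos hEpos hFpos).le
  have hX2 : 1 ≤ (|A| * Real.exp t - |B| * Real.exp (-t)) ^ 2 := by nlinarith [key]
  have heq : (A * Real.exp t + B * Real.exp (-t)) ^ 2
      - (|A| * Real.exp t - |B| * Real.exp (-t)) ^ 2
      = 2 * ((A * B + |A| * |B|) * (Real.exp t * Real.exp (-t))) := by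
    linear_combination (-(Real.exp t ^ 2)) * sq_abs A - (Real.exp (-t) ^ 2) * sq_abs B
  linarith

private lemma exp_ge (ω A B : ℝ) (hω : 0 < ω) (hAB : ¬(A = 0 ∧ B = 0)) :
    ∃ q, 1 ≤ (A * Real.exp (ω * q) + B * Real.exp (-(ω * q))) ^ 2 := by
  by_cases hA : A = 0
  · have hB : B ≠ 0 := fun hB => hAB ⟨hA, hB⟩
    obtain ⟨q, hq⟩ := exp_ge' ω B A hω hB
    refine ⟨-q, ?_⟩
    have : A * Real.exp (ω * -q) + B * Real.exp (-(ω * -q))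
        = B * Real.exp (ω * q) + A * Real.exp (-(ω * q)) := by
      rw [mul_neg, neg_neg]; ring
    rw [this]
    linarith [hq, sq_nonneg (B * Real.exp (ω * q) + A * Real.exp (-(ω * q)))]
  · exact exp_ge' ω A B hω hA

private lemma exp_le (ω A B : ℝ) (hω : 0 < ω) (h1 : 4 * A * B ≤ 1) :
    ∃ p, (A * Real.exp (ω * p) + B * Real.exp (-(ω * p))) ^ 2 ≤ 1 := by
  by_cases hA : A = 0
  · by_cases hB : B = 0
    · exact ⟨0, by simp [hA, hB]⟩
    · refine ⟨Real.log |B| / ω, ?_⟩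
      rw [mul_div_cancel₀ _ hω.ne', hA, Real.exp_neg, Real.exp_log (abs_pos.mpr hB)]
      simp only [zero_mul, zero_add]
      have h2 : (B * |B|⁻¹) ^ 2 = 1 := by
        rw [mul_pow, ← sq_abs B]
        field_simp
      rw [h2]
  · by_cases hB : B = 0
    · refine ⟨-Real.log |A| / ω, ?_⟩
      rw [mul_div_cancel₀ _ hω.ne', hB, Real.exp_neg, neg_neg, Real.exp_log (abs_pos.mpr hA)]
      simp only [zero_mul, add_zero]
      have h2 : (A * |A|⁻¹) ^ 2 = 1 := by
        rw [mul_pow, ← sq_abs A]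
        field_simp
      rw [h2]
    · have hApos := abs_pos.mpr hA
      have hBpos := abs_pos.mpr hB
      set u : ℝ := Real.sqrt (|B| / |A|) with hu_def
      have hu : 0 < u := Real.sqrt_pos.mpr (by positivity)
      have hu2 : u ^ 2 = |B| / |A| := Real.sq_sqrt (by positivity)
      refine ⟨Real.log u / ω, ?_⟩
      rw [mul_div_cancel₀ _ hω.ne', Real.exp_neg, Real.exp_log hu]
      have e1 : A ^ 2 * u ^ 2 = |A| * |B| := by
        rw [hu2, ← sq_abs A, sq]
        field_simp
      have e2 : B ^ 2 = |A| * |B| * u ^ 2 := by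
        rw [hu2, ← sq_abs B, sq]
        field_simp
      have hval : (A * u + B * u⁻¹) ^ 2 = 2 * (|A| * |B|) + 2 * (A * B) := by
        field_simp
        linear_combination u ^ 2 * e1 + e2
      rw [hval]
      rcases le_or_gt (A * B) 0 with h | h
      · have : |A| * |B| = -(A * B) := by rw [← abs_mul]; exact abs_of_nonpos h
        rw [this]; linarith
      · have : |A| * |B| = A * B := by rw [← abs_mul]; exact abs_of_pos h
        rw [this]; linarith

/-- For the g-ODE system (g′)² = (c−d)g² + d, g″ = (c−d)g with c² + d² ≠ 0 and g not
identically zero, there is y₀ with g(y₀)² = 1 if and only if c ≥ 0. -/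
theorem gODE_value_one_iff (c d : ℝ) (hcd : c ^ 2 + d ^ 2 ≠ 0)
    (g : ℝ → ℝ) (hg : ContDiff ℝ (⊤ : ℕ∞) g) (hg0 : ¬ (∀ y : ℝ, g y = 0))
    (hode1 : ∀ y : ℝ, (deriv g y) ^ 2 = (c - d) * (g y) ^ 2 + d)
    (hode2 : ∀ y : ℝ, deriv (deriv g) y = (c - d) * g y) :
    (∃ y₀ : ℝ, (g y₀) ^ 2 = 1) ↔ 0 ≤ c := by
  constructor
  · rintro ⟨y₀, hy₀⟩
    have h := hode1 y₀
    rw [hy₀] at h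
    nlinarith [sq_nonneg (deriv g y₀)]
  · intro hc
    have hgd : Differentiable ℝ g := hg.differentiable (by simp)
    have hgd2 : Differentiable ℝ (deriv g) :=
      ((contDiff_infty_iff_deriv.mp (hg.of_le (by simp))).2).differentiable (by simp)
    have hD1 : ∀ y, HasDerivAt g (deriv g y) y := fun y => (hgd y).hasDerivAt
    have hD2 : ∀ y, HasDerivAt (deriv g) ((c - d) * g y) y := fun y =>
      hode2 y ▸ (hgd2 y).hasDerivAt
    have hcont : Continuous fun y => g y ^ 2 := hg.continuous.pow 2
    rcases lt_trichotomy (c - d) 0 with hk | hk | hk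
    · -- oscillatory case k < 0
      set ω : ℝ := Real.sqrt (d - c) with hω_def
      have hωpos : 0 < ω := Real.sqrt_pos.mpr (by linarith)
      have hω2 : ω ^ 2 = d - c := Real.sq_sqrt (by linarith)
      have hFa : ∀ y, HasDerivAt
          (fun y => ω * g y * Real.cos (ω * y) - deriv g y * Real.sin (ω * y)) 0 y := by
        intro y
        have hin : HasDerivAt (fun y : ℝ => ω * y) ω y := by
          simpa using (hasDerivAt_id y).const_mul ω
        have hcos : HasDerivAt (fun y : ℝ => Real.cos (ω * y)) (-Real.sin (ω * y) * ω) y :=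
          (Real.hasDerivAt_cos (ω * y)).comp y hin
        have hsin : HasDerivAt (fun y : ℝ => Real.sin (ω * y)) (Real.cos (ω * y) * ω) y :=
          (Real.hasDerivAt_sin (ω * y)).comp y hin
        have H := (((hD1 y).const_mul ω).mul hcos).sub ((hD2 y).mul hsin)
        refine H.congr_deriv (Eq.symm ?_)
        linear_combination (g y * Real.sin (ω * y)) * hω2
      have hFb : ∀ y, HasDerivAt
          (fun y => ω * g y * Real.sin (ω * y) + deriv g y * Real.cos (ω * y)) 0 y := by
        intro y
        have hin : HasDerivAt (fun y : ℝ => ω * y) ω y := by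
          simpa using (hasDerivAt_id y).const_mul ω
        have hcos : HasDerivAt (fun y : ℝ => Real.cos (ω * y)) (-Real.sin (ω * y) * ω) y :=
          (Real.hasDerivAt_cos (ω * y)).comp y hin
        have hsin : HasDerivAt (fun y : ℝ => Real.sin (ω * y)) (Real.cos (ω * y) * ω) y :=
          (Real.hasDerivAt_sin (ω * y)).comp y hin
        have H := (((hD1 y).const_mul ω).mul hsin).add ((hD2 y).mul hcos)
        refine H.congr_deriv (Eq.symm ?_)
        linear_combination (-(g y * Real.cos (ω * y))) * hω2
      set α : ℝ := ω * g 0 with hα_def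
      set β : ℝ := deriv g 0 with hβ_def
      have hFac : ∀ y, ω * g y * Real.cos (ω * y) - deriv g y * Real.sin (ω * y) = α := by
        intro y
        have := const_aux hFa y
        simpa using this
      have hFbc : ∀ y, ω * g y * Real.sin (ω * y) + deriv g y * Real.cos (ω * y) = β := by
        intro y
        have := const_aux hFb y
        simpa using this
      have hrep : ∀ y, ω * g y = α * Real.cos (ω * y) + β * Real.sin (ω * y) := by
        intro y
        linear_combination Real.cos (ω * y) * hFac y + Real.sin (ω * y) * hFbc y
          - (ω * g y) * Real.sin_sq_add_cos_sq (ω * y)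
      have hrep' : ∀ y, deriv g y = β * Real.cos (ω * y) + (-α) * Real.sin (ω * y) := by
        intro y
        linear_combination (-Real.sin (ω * y)) * hFac y + Real.cos (ω * y) * hFbc y
          - (deriv g y) * Real.sin_sq_add_cos_sq (ω * y)
      -- point where g = 0
      obtain ⟨p, hp⟩ := trig_zero ω α β hωpos.ne'
      have hgp : g p = 0 := by
        have := hrep p
        rw [hp] at this
        exact by nlinarith [this]
      -- point where deriv g = 0
      obtain ⟨q, hq⟩ := trig_zero ω β (-α) hωpos.ne'
      have hgq : deriv g q = 0 := by rw [hrep' q, hq]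
      have h1q : 1 ≤ g q ^ 2 := by
        have h := hode1 q
        rw [hgq] at h
        nlinarith
      exact ivt_one hcont (by rw [hgp]; norm_num) h1q
    · -- linear case k = 0
      have hcd' : c = d := by linarith
      have hd0 : (deriv g 0) ^ 2 = d := by
        have := hode1 0
        rw [hk] at this
        linarith [this]
      have hdne : d ≠ 0 := by
        intro h
        exact hcd (by rw [hcd', h]; ring)
      have hdpos : 0 < d := lt_of_le_of_ne (hd0 ▸ sq_nonneg _) (Ne.symm hdne)
      set s : ℝ := deriv g 0 with hs_def
      have hsne : s ≠ 0 := by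
        intro h
        rw [h] at hd0
        simp at hd0
        exact hdne hd0.symm
      have hder_const : ∀ y, deriv g y = s := by
        intro y
        have h1 : (deriv g y) ^ 2 = d := by
          have := hode1 y
          rw [hk] at this
          linarith [this]
        by_contra hne
        have h2 : deriv g y = -s := by
          have hfac : (deriv g y - s) * (deriv g y + s) = 0 := by
            have : (deriv g y) ^ 2 = s ^ 2 := by rw [h1, hd0]
            nlinarith [this]
          rcases mul_eq_zero.mp hfac with h | h
          · exact absurd (by linarith) hne
          · linarith
        have h0mem : (0 : ℝ) ∈ Set.uIcc (deriv g 0) (deriv g y) := by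
          rw [h2, ← hs_def]
          rcases le_total 0 s with h | h
          · exact Set.mem_uIcc.mpr (Or.inr ⟨by linarith, h⟩)
          · exact Set.mem_uIcc.mpr (Or.inl ⟨h, by linarith⟩)
        obtain ⟨z, _, hz⟩ := intermediate_value_uIcc
          (hgd2.continuous.continuousOn (s := Set.uIcc 0 y)) h0mem
        have := hode1 z
        rw [hz, hk] at this
        simp at this
        exact hdne this.symm
      have hlin : ∀ y, g y = g 0 + s * y := by
        intro y
        have hF : ∀ y, HasDerivAt (fun y => g y - s * y) 0 y := by
          intro y
          have := (hD1 y).sub ((hasDerivAt_id y).const_mul s)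
          refine this.congr_deriv ?_
          rw [hder_const y]; ring
        have := const_aux hF y
        simp at this
        linarith [this]
      refine ⟨(1 - g 0) / s, ?_⟩
      rw [hlin ((1 - g 0) / s), mul_div_cancel₀ _ hsne]
      ring
    · -- hyperbolic case k > 0
      set ω : ℝ := Real.sqrt (c - d) with hω_def
      have hωpos : 0 < ω := Real.sqrt_pos.mpr (by linarith)
      have hω2 : ω ^ 2 = c - d := Real.sq_sqrt (by linarith)
      have hS : ∀ y, HasDerivAt
          (fun y => (deriv g y - ω * g y) * Real.exp (ω * y)) 0 y := by
        intro y
        have hin : HasDerivAt (fun y : ℝ => ω * y) ω y := by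
          simpa using (hasDerivAt_id y).const_mul ω
        have hexp : HasDerivAt (fun y : ℝ => Real.exp (ω * y)) (Real.exp (ω * y) * ω) y :=
          (Real.hasDerivAt_exp (ω * y)).comp y hin
        have H := ((hD2 y).sub ((hD1 y).const_mul ω)).mul hexp
        refine H.congr_deriv (Eq.symm ?_)
        simp only [Pi.sub_apply]
        linear_combination (g y * Real.exp (ω * y)) * hω2
      have hT : ∀ y, HasDerivAt
          (fun y => (deriv g y + ω * g y) * Real.exp (-(ω * y))) 0 y := by
        intro y
        have hin : HasDerivAt (fun y : ℝ => -(ω * y)) (-ω) y := by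
          exact ((hasDerivAt_id y).const_mul ω).neg.congr_deriv (by simp)
        have hexp : HasDerivAt (fun y : ℝ => Real.exp (-(ω * y)))
            (Real.exp (-(ω * y)) * -ω) y :=
          hin.exp
        have H := ((hD2 y).add ((hD1 y).const_mul ω)).mul hexp
        refine H.congr_deriv (Eq.symm ?_)
        simp only [Pi.add_apply]
        linear_combination (g y * Real.exp (-(ω * y))) * hω2
      set s₀ : ℝ := deriv g 0 - ω * g 0 with hs₀_def
      set t₀ : ℝ := deriv g 0 + ω * g 0 with ht₀_def
      have hSc : ∀ y, (deriv g y - ω * g y) * Real.exp (ω * y) = s₀ := by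
        intro y
        have := const_aux hS y
        simpa using this
      have hTc : ∀ y, (deriv g y + ω * g y) * Real.exp (-(ω * y)) = t₀ := by
        intro y
        have := const_aux hT y
        simpa using this
      set A : ℝ := t₀ / (2 * ω) with hA_def
      set B : ℝ := -s₀ / (2 * ω) with hB_def
      have hrep : ∀ y, g y = A * Real.exp (ω * y) + B * Real.exp (-(ω * y)) := by
        intro y
        have key : Real.exp (ω * y) * Real.exp (-(ω * y)) = 1 := by
          rw [← Real.exp_add]; simp
        have h1' : deriv g y - ω * g y = s₀ * Real.exp (-(ω * y)) := by
          linear_combination Real.exp (-(ω * y)) * hSc y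
            - (deriv g y - ω * g y) * key
        have h2' : deriv g y + ω * g y = t₀ * Real.exp (ω * y) := by
          linear_combination Real.exp (ω * y) * hTc y
            - (deriv g y + ω * g y) * key
        have h3 : 2 * ω * g y = t₀ * Real.exp (ω * y) - s₀ * Real.exp (-(ω * y)) := by
          linear_combination h2' - h1'
        rw [hA_def, hB_def, div_mul_eq_mul_div, div_mul_eq_mul_div, ← add_div,
          eq_div_iff (by positivity : (2 * ω) ≠ 0)]
        linear_combination h3
      have hst : s₀ * t₀ = d := by
        rw [hs₀_def, ht₀_def]
        linear_combination hode1 0 - (g 0) ^ 2 * hω2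
      have h4AB : 4 * A * B ≤ 1 := by
        have hABeq : 4 * A * B * ω ^ 2 = -d := by
          rw [hA_def, hB_def]
          field_simp
          linear_combination (-4) * hst
        nlinarith [sq_nonneg ω, hωpos, hω2, hc]
      have hAB0 : ¬(A = 0 ∧ B = 0) := by
        rintro ⟨hA0, hB0⟩
        exact hg0 (fun y => by rw [hrep y, hA0, hB0]; ring)
      obtain ⟨q, hq⟩ := exp_ge ω A B hωpos hAB0
      obtain ⟨p, hp⟩ := exp_le ω A B hωpos h4AB
      rw [← hrep q] at hq
      rw [← hrep p] at hp
      exact ivt_one hcont hp hq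
end
end
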